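/- arXiv:2506.06423 — 8 statements merged into one kernel-verified Lean document; each statement's English description precedes it below -/
import Mathlib

section
/- Let Y be a complex 3×3 matrix with SVD Y = U_L · diag(y₁, y₂, y₃) · U_R†, 0 ≤ y₁ ≤ y₂ ≤ y₃, and suppose y₃² > 2y₂². Let α be an index of a longest row of Y (i.e. (Y Y†)_{αα} ≥ (Y Y†)_{jj} for all j). Then |U_{L,α3}|² ≥ (y₃² − 2y₂²)/(3(y₃² − y₂²)) = 1/(X+1), where X = (2y₃² − y₂²)/(y₃² − 2y₂²). -/
/-!
Write `Y = U_L D U_Rᴴ` with `D = diag(y)`. Right multiplication by a unitary matrix preserves row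
norms, so the squared length of row `j` of `Y` is `∑ᵢ yᵢ² |U_{L,ji}|²`. Since the columns of `U_L`
are unit vectors, these squared lengths add up to `y₁² + y₂² + y₃²`, so the longest row has squared
length at least a third of that. On the other hand, the weights `|U_{L,αi}|²` sum to one, so that
squared length is at most `y₂² (1 - |U_{L,α3}|²) + y₃² |U_{L,α3}|²`; comparing the two bounds gives
the claim.
-/

open Matrix

namespace Matrix

variable {𝕜 m n : Type*} [RCLike 𝕜]

lemma mul_conjTranspose_self_apply_self [Fintype n] (A : Matrix m n 𝕜) (i : m) :
    (A * Aᴴ) i i = ((∑ k, ‖A i k‖ ^ 2 : ℝ) : 𝕜) := by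
  simp [mul_apply, RCLike.mul_conj]

lemma conjTranspose_mul_self_apply_self [Fintype m] (A : Matrix m n 𝕜) (k : n) :
    (Aᴴ * A) k k = ((∑ i, ‖A i k‖ ^ 2 : ℝ) : 𝕜) := by
  simp [mul_apply, RCLike.conj_mul]

variable [Fintype n] [DecidableEq n] {U : Matrix n n 𝕜}

lemma sum_norm_sq_row_of_mem_unitaryGroup (hU : U ∈ unitaryGroup n 𝕜) (i : n) :
    ∑ k, ‖U i k‖ ^ 2 = 1 := by
  have h := congr_fun₂ (mem_unitaryGroup_iff.mp hU) i i
  rw [star_eq_conjTranspose, mul_conjTranspose_self_apply_self, one_apply_eq] at h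
  exact_mod_cast h

lemma sum_norm_sq_col_of_mem_unitaryGroup (hU : U ∈ unitaryGroup n 𝕜) (k : n) :
    ∑ i, ‖U i k‖ ^ 2 = 1 := by
  have h := congr_fun₂ (mem_unitaryGroup_iff'.mp hU) k k
  rw [star_eq_conjTranspose, conjTranspose_mul_self_apply_self, one_apply_eq] at h
  exact_mod_cast h

lemma sum_norm_sq_mul_unitary_row (A : Matrix m n 𝕜) (hU : U ∈ unitaryGroup n 𝕜) (i : m) :
    ∑ k, ‖(A * U) i k‖ ^ 2 = ∑ k, ‖A i k‖ ^ 2 := by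
  have hUU : U * Uᴴ = 1 := mem_unitaryGroup_iff.mp hU
  have h : (A * U) * (A * U)ᴴ = A * Aᴴ := by
    rw [conjTranspose_mul, Matrix.mul_assoc, ← Matrix.mul_assoc U, hUU, Matrix.one_mul]
  have hi := congr_fun₂ h i i
  rw [mul_conjTranspose_self_apply_self, mul_conjTranspose_self_apply_self] at hi
  exact_mod_cast hi

lemma sum_norm_sq_mul_diagonal_row (A : Matrix m n 𝕜) (d : n → 𝕜) (i : m) :
    ∑ k, ‖(A * diagonal d) i k‖ ^ 2 = ∑ k, ‖d k‖ ^ 2 * ‖A i k‖ ^ 2 := by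
  simp only [mul_diagonal, norm_mul, mul_pow, mul_comm]

lemma sum_norm_sq_row_of_eq_svd {Y U V : Matrix n n 𝕜} {s : n → ℝ}
    (hV : V ∈ unitaryGroup n 𝕜) (hY : Y = U * diagonal (fun i => (s i : 𝕜)) * Vᴴ) (j : n) :
    ∑ k, ‖Y j k‖ ^ 2 = ∑ i, s i ^ 2 * ‖U j i‖ ^ 2 := by
  have hV_star : Vᴴ ∈ unitaryGroup n 𝕜 := Unitary.star_mem hV
  rw [hY, sum_norm_sq_mul_unitary_row _ hV_star, sum_norm_sq_mul_diagonal_row]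
  simp only [RCLike.norm_ofReal, sq_abs]

lemma sum_sum_norm_sq_of_eq_svd {Y U V : Matrix n n 𝕜} {s : n → ℝ}
    (hU : U ∈ unitaryGroup n 𝕜) (hV : V ∈ unitaryGroup n 𝕜)
    (hY : Y = U * diagonal (fun i => (s i : 𝕜)) * Vᴴ) :
    ∑ j, ∑ k, ‖Y j k‖ ^ 2 = ∑ i, s i ^ 2 := by
  simp only [sum_norm_sq_row_of_eq_svd hV hY]
  rw [Finset.sum_comm]
  simp only [← Finset.mul_sum, sum_norm_sq_col_of_mem_unitaryGroup hU, mul_one]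

end Matrix

lemma le_of_three_mul_weighted_sum_ge {s₀ s₁ s₂ a₀ a₁ a₂ : ℝ} (hs₀ : 0 ≤ s₀) (hs₀₁ : s₀ ≤ s₁)
    (hs₁₂ : s₁ < s₂) (ha₀ : 0 ≤ a₀) (ha : a₀ + a₁ + a₂ = 1)
    (h : s₀ + s₁ + s₂ ≤ 3 * (s₀ * a₀ + s₁ * a₁ + s₂ * a₂)) :
    (s₂ - 2 * s₁) / (3 * (s₂ - s₁)) ≤ a₂ := by
  rw [div_le_iff₀ (by linarith)]
  nlinarith [mul_nonneg ha₀ (sub_nonneg.mpr hs₀₁)]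

theorem longest_row_third_component_lower_bound_general
    (Y U_L U_R : Matrix (Fin 3) (Fin 3) ℂ) (y : Fin 3 → ℝ) (α : Fin 3)
    (hUL : U_L ∈ Matrix.unitaryGroup (Fin 3) ℂ)
    (hUR : U_R ∈ Matrix.unitaryGroup (Fin 3) ℂ)
    (hy0 : 0 ≤ y 0) (h01 : y 0 ≤ y 1)
    (hgap : 2 * (y 1)^2 < (y 2)^2)
    (hSVD : Y = U_L * Matrix.diagonal (fun i => (y i : ℂ)) * U_Rᴴ)
    (hα : ∀ j, ∑ k, ‖Y j k‖^2 ≤ ∑ k, ‖Y α k‖^2) :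
    ((y 2)^2 - 2 * (y 1)^2) / (3 * ((y 2)^2 - (y 1)^2)) ≤ ‖U_L α 2‖^2 ∧
    ((y 2)^2 - 2 * (y 1)^2) / (3 * ((y 2)^2 - (y 1)^2))
      = 1 / ((2 * (y 2)^2 - (y 1)^2) / ((y 2)^2 - 2 * (y 1)^2) + 1) := by
  have hmean : ∑ i, y i ^ 2 ≤ 3 * ∑ k, ‖Y α k‖ ^ 2 := by
    rw [← sum_sum_norm_sq_of_eq_svd hUL hUR hSVD]
    simpa using Finset.sum_le_card_nsmul Finset.univ _ _ fun j _ => hα j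
  rw [sum_norm_sq_row_of_eq_svd hUR hSVD] at hmean
  simp only [Fin.sum_univ_three] at hmean
  have hweights := sum_norm_sq_row_of_mem_unitaryGroup hUL α
  rw [Fin.sum_univ_three] at hweights
  constructor
  · exact le_of_three_mul_weighted_sum_ge (sq_nonneg _) (pow_le_pow_left₀ hy0 h01 2)
      (by linarith [sq_nonneg (y 1)]) (sq_nonneg _) hweights hmean
  · have hne : (y 2)^2 - 2 * (y 1)^2 ≠ 0 := by linarith
    rw [div_add_one hne, one_div_div]
    ring

/-- Lemma 1, first inequality: the longest row α of Y satisfies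
`|U_{L,α3}|² ≥ (y₃² − 2y₂²)/(3(y₃² − y₂²)) = 1/(X+1)`. -/
theorem longest_row_third_component_lower_bound
    (Y U_L U_R : Matrix (Fin 3) (Fin 3) ℂ) (y : Fin 3 → ℝ) (α : Fin 3)
    (hUL : U_L ∈ Matrix.unitaryGroup (Fin 3) ℂ)
    (hUR : U_R ∈ Matrix.unitaryGroup (Fin 3) ℂ)
    (hy0 : 0 ≤ y 0) (h01 : y 0 ≤ y 1) (h12 : y 1 ≤ y 2)
    (hgap : 2 * (y 1)^2 < (y 2)^2)
    (hSVD : Y = U_L * Matrix.diagonal (fun i => (y i : ℂ)) * U_Rᴴ)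
    (hα : ∀ j, ∑ k, ‖Y j k‖^2 ≤ ∑ k, ‖Y α k‖^2) :
    ((y 2)^2 - 2 * (y 1)^2) / (3 * ((y 2)^2 - (y 1)^2)) ≤ ‖U_L α 2‖^2 ∧
    ((y 2)^2 - 2 * (y 1)^2) / (3 * ((y 2)^2 - (y 1)^2))
      = 1 / ((2 * (y 2)^2 - (y 1)^2) / ((y 2)^2 - 2 * (y 1)^2) + 1) :=
  longest_row_third_component_lower_bound_general Y U_L U_R y α hUL hUR hy0 h01 hgap hSVD hα
end

section
/- Let Y be a complex 3×3 matrix with SVD Y = U_L · diag(y₁, y₂, y₃) · U_R†, 0 ≤ y₁ ≤ y₂ ≤ y₃, and suppose y₂² > 2y₁². Let Ỹ be the cofactor matrix of Y and let γ index a longest row of Ỹ. Then |U_{L,γ1}|² ≥ 1/(Z+1) and (|U_{L,γ2}|² + |U_{L,γ3}|²)/|U_{L,γ1}|² ≤ Z, where Z = (2y₂² − y₁²)/(y₂² − 2y₁²). -/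
open Matrix

private lemma norm_one_of_unitary' {z : ℂ} (hz : z ∈ unitary ℂ) : ‖z‖ = 1 := by
  have h : star z * z = 1 := hz.1
  have h2 : Complex.normSq z = 1 := by
    have := congrArg Complex.re (by rw [← h, Complex.star_def, mul_comm, Complex.mul_conj] :
      (1 : ℂ) = Complex.normSq z)
    simpa using this.symm
  have h3 : ‖z‖ ^ 2 = 1 := by
    rw [Complex.sq_norm, h2]
  nlinarith [norm_nonneg z]

private lemma arith_endgame (s0 s1 s2 a0 a1 a2 : ℝ) (hs0 : 0 ≤ s0) (h01 : s0 ≤ s1)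
    (h12 : s1 ≤ s2) (hgap : 2*s0 < s1) (ha0 : 0 ≤ a0) (ha1 : 0 ≤ a1) (ha2 : 0 ≤ a2)
    (hrow : a0+a1+a2 = 1)
    (hKey : s1*s2 + s0*s2 + s0*s1 ≤ 3*(s1*s2*a0 + s0*s2*a1 + s0*s1*a2)) :
    1/((2*s1-s0)/(s1-2*s0)+1) ≤ a0 ∧ (a1+a2)/a0 ≤ (2*s1-s0)/(s1-2*s0) := by
  have hden : 0 < s1 - 2*s0 := by linarith
  have hs2 : 0 < s2 := by linarith
  have hZpos : 0 < (2*s1-s0)/(s1-2*s0) := div_pos (by linarith) hden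
  have hZ1 : (2*s1-s0)/(s1-2*s0) + 1 = 3*(s1-s0)/(s1-2*s0) := by field_simp; ring
  have ha2eq : a2 = 1 - a0 - a1 := by linarith
  rw [ha2eq] at hKey ha2
  have h1 : 1/((2*s1-s0)/(s1-2*s0)+1) ≤ a0 := by
    rw [hZ1, one_div_div, div_le_iff₀ (by linarith : (0:ℝ) < 3*(s1-s0))]
    have hT : s2*(s1-2*s0) + s0*s1 ≤ 3*a0*s2*(s1-s0) := by
      nlinarith [mul_nonneg (mul_nonneg hs0 ha2) (by linarith : (0:ℝ) ≤ s2 - s1)]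
    nlinarith [mul_nonneg hs0 (by linarith : (0:ℝ) ≤ s1)]
  refine ⟨h1, ?_⟩
  have ha0pos : 0 < a0 := lt_of_lt_of_le (by positivity) h1
  have h2 : 1 ≤ a0 * ((2*s1-s0)/(s1-2*s0)+1) := (div_le_iff₀ (by linarith)).mp h1
  rw [div_le_iff₀ ha0pos]
  nlinarith [h2]

set_option maxHeartbeats 1000000 in
/-- Lemma 2: for the longest row γ of the cofactor matrix Ỹ,
`|U_{L,γ1}|² ≥ 1/(Z+1)` and `(|U_{L,γ2}|² + |U_{L,γ3}|²)/|U_{L,γ1}|² ≤ Z`. -/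
theorem cofactor_longest_row_component_bounds
    (Y U_L U_R Yt : Matrix (Fin 3) (Fin 3) ℂ) (y : Fin 3 → ℝ) (γ : Fin 3)
    (hUL : U_L ∈ Matrix.unitaryGroup (Fin 3) ℂ)
    (hUR : U_R ∈ Matrix.unitaryGroup (Fin 3) ℂ)
    (hy0 : 0 ≤ y 0) (h01 : y 0 ≤ y 1) (h12 : y 1 ≤ y 2)
    (hgap : 2 * (y 0)^2 < (y 1)^2)
    (hSVD : Y = U_L * Matrix.diagonal (fun i => (y i : ℂ)) * U_Rᴴ)
    (hYt : Yt = (Matrix.adjugate Y)ᵀ)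
    (hγ : ∀ j, ∑ k, ‖Yt j k‖^2 ≤ ∑ k, ‖Yt γ k‖^2) :
    1 / ((2 * (y 1)^2 - (y 0)^2) / ((y 1)^2 - 2 * (y 0)^2) + 1) ≤ ‖U_L γ 0‖^2 ∧
    (‖U_L γ 1‖^2 + ‖U_L γ 2‖^2) / ‖U_L γ 0‖^2
      ≤ (2 * (y 1)^2 - (y 0)^2) / ((y 1)^2 - 2 * (y 0)^2) := by
  -- singular values of the cofactor matrix
  set d : Fin 3 → ℝ := ![y 1 * y 2, y 0 * y 2, y 0 * y 1] with hd_def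
  set dC : Fin 3 → ℂ := fun i => (d i : ℂ) with hdC_def
  -- adjugate of the diagonal part
  have hD : adjugate (Matrix.diagonal (fun i => (y i : ℂ))) = Matrix.diagonal dC := by
    have e0 : (Finset.univ : Finset (Fin 3)).erase 0 = {1, 2} := by decide
    have e1 : (Finset.univ : Finset (Fin 3)).erase 1 = {0, 2} := by decide
    have e2 : (Finset.univ : Finset (Fin 3)).erase 2 = {0, 1} := by decide
    have hv : (fun i : Fin 3 => ∏ j ∈ Finset.univ.erase i, (y j : ℂ)) = dC := by
      funext i
      fin_cases i
      · show ∏ j ∈ Finset.univ.erase 0, (y j : ℂ) = _; rw [e0]; simp [hdC_def, hd_def]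
      · show ∏ j ∈ Finset.univ.erase 1, (y j : ℂ) = _; rw [e1]; simp [hdC_def, hd_def]
      · show ∏ j ∈ Finset.univ.erase 2, (y j : ℂ) = _; rw [e2]; simp [hdC_def, hd_def]
    rw [adjugate_diagonal, hv]
  -- adjugate of a unitary matrix
  have hadjU : ∀ U : Matrix (Fin 3) (Fin 3) ℂ, U ∈ Matrix.unitaryGroup (Fin 3) ℂ →
      adjugate U = U.det • Uᴴ := by
    intro U hU
    have h : U * Uᴴ = 1 := Matrix.mem_unitaryGroup_iff.mp hU
    calc adjugate U = adjugate U * (U * Uᴴ) := by rw [h, mul_one]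
      _ = (adjugate U * U) * Uᴴ := by rw [mul_assoc]
      _ = U.det • Uᴴ := by rw [adjugate_mul, Matrix.smul_mul, one_mul]
  have hURH : U_Rᴴ ∈ Matrix.unitaryGroup (Fin 3) ℂ := Unitary.star_mem hUR
  set c : ℂ := U_Rᴴ.det * U_L.det with hc_def
  have hcnorm : ‖c‖ = 1 := by
    rw [hc_def, norm_mul, norm_one_of_unitary' (Matrix.det_of_mem_unitary hURH),
      norm_one_of_unitary' (Matrix.det_of_mem_unitary hUL), one_mul]
  -- structure of the adjugate of Y
  have hadjY : adjugate Y = c • (U_R * Matrix.diagonal dC * U_Lᴴ) := by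
    rw [hSVD, adjugate_mul_distrib, adjugate_mul_distrib, hadjU _ hUL, hadjU _ hURH, hD,
      conjTranspose_conjTranspose]
    rw [Matrix.smul_mul, Matrix.mul_smul, Matrix.mul_smul, smul_smul, Matrix.mul_assoc]
  set M : Matrix (Fin 3) (Fin 3) ℂ := U_Lᴴᵀ * Matrix.diagonal dC * U_Rᵀ with hM_def
  have hYtM : Yt = c • M := by
    rw [hYt, hadjY, Matrix.transpose_smul, Matrix.transpose_mul, Matrix.transpose_mul,
      diagonal_transpose, hM_def, Matrix.mul_assoc]
  have hstar : ∀ i, star (dC i) = dC i := by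
    intro i; simp [hdC_def, Complex.star_def, Complex.conj_ofReal]
  -- M * Mᴴ
  have hMM : M * Mᴴ = U_Lᴴᵀ * Matrix.diagonal (fun i => dC i * dC i) * (U_Lᴴᵀ)ᴴ := by
    have htc : (U_Rᵀ)ᴴ = (U_Rᴴ)ᵀ := by
      ext i j; simp [conjTranspose_apply, transpose_apply]
    have h1 : U_Rᵀ * (U_Rᵀ)ᴴ = 1 := by
      have h2 : U_Rᴴ * U_R = 1 := by
        simpa [Matrix.star_eq_conjTranspose] using Matrix.mem_unitaryGroup_iff'.mp hUR
      calc U_Rᵀ * (U_Rᵀ)ᴴ = U_Rᵀ * (U_Rᴴ)ᵀ := by rw [htc]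
        _ = (U_Rᴴ * U_R)ᵀ := by rw [Matrix.transpose_mul]
        _ = 1 := by rw [h2, Matrix.transpose_one]
    calc M * Mᴴ
        = U_Lᴴᵀ * Matrix.diagonal dC * (U_Rᵀ * (U_Rᵀ)ᴴ) * (Matrix.diagonal dC)ᴴ * (U_Lᴴᵀ)ᴴ := by
          rw [hM_def]; simp only [conjTranspose_mul, Matrix.mul_assoc]
      _ = U_Lᴴᵀ * Matrix.diagonal (fun i => dC i * dC i) * (U_Lᴴᵀ)ᴴ := by
          rw [h1, Matrix.mul_one, diagonal_conjTranspose,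
            Matrix.mul_assoc U_Lᴴᵀ, diagonal_mul_diagonal]
          simp only [Pi.star_apply, hstar]
  -- key row-sum formula
  have key : ∀ j, (∑ k, ‖Yt j k‖^2) = ∑ i, (d i)^2 * ‖U_L j i‖^2 := by
    intro j
    have h1 : (∑ k, ‖Yt j k‖^2) = ∑ k, ‖M j k‖^2 := by
      refine Finset.sum_congr rfl fun k _ => ?_
      rw [hYtM, Matrix.smul_apply, smul_eq_mul, norm_mul, hcnorm, one_mul]
    have h2 : (∑ k, ‖M j k‖^2) = ((M * Mᴴ) j j).re := by
      rw [Matrix.mul_apply, Complex.re_sum]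
      refine Finset.sum_congr rfl fun k _ => ?_
      rw [conjTranspose_apply]
      simp [Complex.star_def, Complex.mul_conj, Complex.normSq_eq_norm_sq,
        ← Complex.ofReal_pow]
    have h3 : ((U_Lᴴᵀ * Matrix.diagonal (fun i => dC i * dC i) * (U_Lᴴᵀ)ᴴ) j j).re
        = ∑ i, (d i)^2 * ‖U_L j i‖^2 := by
      rw [Matrix.mul_apply, Complex.re_sum]
      refine Finset.sum_congr rfl fun i _ => ?_
      rw [Matrix.mul_diagonal]
      have e1 : U_Lᴴᵀ j i * (dC i * dC i) * (U_Lᴴᵀ)ᴴ i j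
          = ((d i : ℂ) * (d i : ℂ)) * (U_Lᴴᵀ j i * star (U_Lᴴᵀ j i)) := by
        rw [conjTranspose_apply, hdC_def]; ring
      rw [e1, Complex.star_def, Complex.mul_conj, ← Complex.ofReal_mul, ← Complex.ofReal_mul,
        Complex.ofReal_re]
      have e2 : Complex.normSq (U_Lᴴᵀ j i) = ‖U_L j i‖^2 := by
        rw [Complex.normSq_eq_norm_sq, transpose_apply, conjTranspose_apply,
          norm_star]
      rw [e2]; ring
    rw [h1, h2, hMM, h3]
  -- row and column sums of |U_L|²
  have hrr : U_L * U_Lᴴ = 1 := Matrix.mem_unitaryGroup_iff.mp hUL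
  have hcc : U_Lᴴ * U_L = 1 := by
    simpa [Matrix.star_eq_conjTranspose] using Matrix.mem_unitaryGroup_iff'.mp hUL
  have hrow : ∀ j, ∑ i, ‖U_L j i‖^2 = 1 := by
    intro j
    have := congrArg (fun A => (A j j).re) hrr
    simp only [Matrix.mul_apply, Complex.re_sum, Matrix.one_apply_eq, Complex.one_re] at this
    rw [← this]
    refine Finset.sum_congr rfl fun i _ => ?_
    rw [conjTranspose_apply]
    simp [Complex.star_def, Complex.mul_conj, Complex.normSq_eq_norm_sq,
      ← Complex.ofReal_pow]
  have hcol : ∀ i, ∑ j, ‖U_L j i‖^2 = 1 := by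
    intro i
    have := congrArg (fun A => (A i i).re) hcc
    simp only [Matrix.mul_apply, Complex.re_sum, Matrix.one_apply_eq, Complex.one_re] at this
    rw [← this]
    refine Finset.sum_congr rfl fun j _ => ?_
    rw [conjTranspose_apply]
    simp [Complex.star_def, mul_comm, Complex.mul_conj, Complex.normSq_eq_norm_sq,
      ← Complex.ofReal_pow]
  -- expand everything into scalars
  have hdval0 : d 0 = y 1 * y 2 := rfl
  have hdval1 : d 1 = y 0 * y 2 := rfl
  have hdval2 : d 2 = y 0 * y 1 := rfl
  have keyγ := key γ
  have key0 := key 0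
  have key1 := key 1
  have key2 := key 2
  simp only [Fin.sum_univ_three, hdval0, hdval1, hdval2] at keyγ key0 key1 key2
  have hγ0 := hγ 0; have hγ1 := hγ 1; have hγ2 := hγ 2
  simp only [Fin.sum_univ_three] at hγ0 hγ1 hγ2
  rw [keyγ, key0] at hγ0
  rw [keyγ, key1] at hγ1
  rw [keyγ, key2] at hγ2
  have hcol0 := hcol 0; have hcol1 := hcol 1; have hcol2 := hcol 2
  simp only [Fin.sum_univ_three] at hcol0 hcol1 hcol2
  have hrowγ := hrow γ
  simp only [Fin.sum_univ_three] at hrowγ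
  -- key inequality
  have hKey : (y 1)^2*(y 2)^2 + (y 0)^2*(y 2)^2 + (y 0)^2*(y 1)^2
      ≤ 3*((y 1)^2*(y 2)^2*‖U_L γ 0‖^2 + (y 0)^2*(y 2)^2*‖U_L γ 1‖^2
            + (y 0)^2*(y 1)^2*‖U_L γ 2‖^2) := by
    have ht : (y 1 * y 2)^2*(‖U_L 0 0‖^2 + ‖U_L 1 0‖^2 + ‖U_L 2 0‖^2)
        + (y 0 * y 2)^2*(‖U_L 0 1‖^2 + ‖U_L 1 1‖^2 + ‖U_L 2 1‖^2)
        + (y 0 * y 1)^2*(‖U_L 0 2‖^2 + ‖U_L 1 2‖^2 + ‖U_L 2 2‖^2)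
        = (y 1 * y 2)^2 + (y 0 * y 2)^2 + (y 0 * y 1)^2 := by
      rw [hcol0, hcol1, hcol2]; ring
    linarith [hγ0, hγ1, hγ2, ht]
  -- conclude
  exact arith_endgame ((y 0)^2) ((y 1)^2) ((y 2)^2) (‖U_L γ 0‖^2) (‖U_L γ 1‖^2) (‖U_L γ 2‖^2)
    (by positivity) (by nlinarith) (by nlinarith [le_trans hy0 h01]) (by linarith)
    (by positivity) (by positivity) (by positivity) hrowγ hKey
end

section
/- Let Y be a complex 3×3 matrix with SVD Y = U_L · diag(y₁, y₂, y₃) · U_R†, 0 ≤ y₁ ≤ y₂ ≤ y₃, y₂² > 2y₁². Let Ỹ be the cofactor matrix of Y and let δ index a longest column of Ỹ. Then |U_{R,δ1}|² ≥ 1/(Z+1) and (|U_{R,δ2}|² + |U_{R,δ3}|²)/|U_{R,δ1}|² ≤ Z, where Z = (2y₂² − y₁²)/(y₂² − 2y₁²). -/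
open Matrix

lemma final_algebra (y0 y1 y2 a b c : ℝ) (hy0 : 0 ≤ y0) (h01 : y0 ≤ y1) (h12 : y1 ≤ y2)
    (hgap : 2 * y0^2 < y1^2) (ha : 0 ≤ a) (hb : 0 ≤ b) (hc : 0 ≤ c) (habc : a + b + c = 1)
    (hkey : (y1*y2)^2 + (y0*y2)^2 + (y0*y1)^2
      ≤ 3 * ((y1*y2)^2 * a + (y0*y2)^2 * b + (y0*y1)^2 * c)) :
    1 / ((2 * y1^2 - y0^2) / (y1^2 - 2 * y0^2) + 1) ≤ a ∧
    (b + c) / a ≤ (2 * y1^2 - y0^2) / (y1^2 - 2 * y0^2) := by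
  have hP : 0 < y1^2 - 2 * y0^2 := by linarith
  have hQ : 0 < y1^2 - y0^2 := by nlinarith [sq_nonneg y0]
  have hy2 : 0 < y2^2 := by nlinarith [sq_nonneg y0]
  have h12' : y1^2 ≤ y2^2 := by nlinarith
  have hBC : 0 ≤ c * (y0^2 * (y2^2 - y1^2)) :=
    mul_nonneg hc (mul_nonneg (sq_nonneg y0) (by linarith))
  have h1 : (y1^2 - 2*y0^2) * y2^2 ≤ 3*a*((y1^2 - y0^2)*y2^2) := by
    nlinarith [hkey, hBC, sq_nonneg (y0*y1)]
  have hA : y1^2 - 2*y0^2 ≤ 3*a*(y1^2 - y0^2) := by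
    have := (mul_le_mul_iff_of_pos_right hy2).mp (by nlinarith [h1] : (y1^2 - 2*y0^2) * y2^2 ≤ (3*a*(y1^2 - y0^2)) * y2^2)
    linarith
  have ha' : 0 < a := by nlinarith [hA, hP, hQ]
  constructor
  · have hZ1 : (2 * y1^2 - y0^2) / (y1^2 - 2 * y0^2) + 1 = 3*(y1^2 - y0^2) / (y1^2 - 2*y0^2) := by
      field_simp; ring
    rw [hZ1, one_div_div]
    rw [div_le_iff₀ (by linarith)]
    linarith [hA]
  · rw [div_le_div_iff₀ ha' hP]
    nlinarith [hA]

/-- Lemma 2, right-handed version: for the longest column δ of the cofactor matrix Ỹ,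
`|U_{R,δ1}|² ≥ 1/(Z+1)` and `(|U_{R,δ2}|² + |U_{R,δ3}|²)/|U_{R,δ1}|² ≤ Z`. -/
theorem cofactor_longest_column_component_bounds
    (Y U_L U_R Yt : Matrix (Fin 3) (Fin 3) ℂ) (y : Fin 3 → ℝ) (δ : Fin 3)
    (hUL : U_L ∈ Matrix.unitaryGroup (Fin 3) ℂ)
    (hUR : U_R ∈ Matrix.unitaryGroup (Fin 3) ℂ)
    (hy0 : 0 ≤ y 0) (h01 : y 0 ≤ y 1) (h12 : y 1 ≤ y 2)
    (hgap : 2 * (y 0)^2 < (y 1)^2)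
    (hSVD : Y = U_L * Matrix.diagonal (fun i => (y i : ℂ)) * U_Rᴴ)
    (hYt : Yt = (Matrix.adjugate Y)ᵀ)
    (hδ : ∀ j, ∑ k, ‖Yt k j‖^2 ≤ ∑ k, ‖Yt k δ‖^2) :
    1 / ((2 * (y 1)^2 - (y 0)^2) / ((y 1)^2 - 2 * (y 0)^2) + 1) ≤ ‖U_R δ 0‖^2 ∧
    (‖U_R δ 1‖^2 + ‖U_R δ 2‖^2) / ‖U_R δ 0‖^2
      ≤ (2 * (y 1)^2 - (y 0)^2) / ((y 1)^2 - 2 * (y 0)^2) := by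
  have hadj : ∀ (U : Matrix (Fin 3) (Fin 3) ℂ), U ∈ Matrix.unitaryGroup (Fin 3) ℂ →
      adjugate U = det U • Uᴴ := by
    intro U hU
    have h1 : Uᴴ * U = 1 := by simpa [Matrix.star_eq_conjTranspose] using hU.1
    rw [← Matrix.inv_eq_left_inv h1, Matrix.inv_def, smul_smul,
      Ring.mul_inverse_cancel _ (Matrix.isUnit_det_of_left_inverse h1), one_smul]
  have hUR1 : U_Rᴴ * U_R = 1 := by simpa [Matrix.star_eq_conjTranspose] using hUR.1
  have hUR2 : U_R * U_Rᴴ = 1 := by simpa [Matrix.star_eq_conjTranspose] using hUR.2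
  have hUL1 : U_Lᴴ * U_L = 1 := by simpa [Matrix.star_eq_conjTranspose] using hUL.1
  have hURH : U_Rᴴ ∈ Matrix.unitaryGroup (Fin 3) ℂ := by
    rw [← Matrix.star_eq_conjTranspose]; exact Unitary.star_mem hUR
  set w : Fin 3 → ℝ := ![y 1 * y 2, y 0 * y 2, y 0 * y 1] with hw
  -- step 1 : Yᴴ * Y
  have hYY : Yᴴ * Y = U_R * Matrix.diagonal (fun i => (((y i)^2 : ℝ) : ℂ)) * U_Rᴴ := by
    subst hSVD
    have hD : (Matrix.diagonal (fun i => ((y i : ℝ) : ℂ)))ᴴ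
        = Matrix.diagonal (fun i => ((y i : ℝ) : ℂ)) := by
      rw [Matrix.diagonal_conjTranspose]
      ext i j
      simp [Matrix.diagonal_apply, Pi.star_apply, Complex.conj_ofReal]
    rw [conjTranspose_mul, conjTranspose_mul, conjTranspose_conjTranspose, hD]
    simp only [Matrix.mul_assoc]
    rw [show U_Lᴴ * (U_L * (Matrix.diagonal (fun i => ((y i : ℝ) : ℂ)) * U_Rᴴ))
        = Matrix.diagonal (fun i => ((y i : ℝ) : ℂ)) * U_Rᴴ by
      rw [← Matrix.mul_assoc, hUL1, Matrix.one_mul]]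
    rw [← Matrix.mul_assoc (Matrix.diagonal _), Matrix.diagonal_mul_diagonal]
    congr 2
    funext i
    push_cast
    ring
  -- step 2 : adjugate Y * (adjugate Y)ᴴ
  have hNN : adjugate Y * (adjugate Y)ᴴ
      = U_R * Matrix.diagonal (fun i => (((w i)^2 : ℝ) : ℂ)) * U_Rᴴ := by
    rw [Matrix.adjugate_conjTranspose, ← Matrix.adjugate_mul_distrib, hYY,
      Matrix.adjugate_mul_distrib, Matrix.adjugate_mul_distrib, Matrix.adjugate_diagonal,
      hadj U_R hUR, hadj U_Rᴴ hURH, conjTranspose_conjTranspose]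
    simp only [smul_mul_assoc, mul_smul_comm, smul_smul]
    rw [← Matrix.det_mul, hUR2, Matrix.det_one, one_smul]
    have hfun : (fun i => ∏ j ∈ Finset.univ.erase i, ((y j ^ 2 : ℝ) : ℂ))
        = (fun i => ((w i ^ 2 : ℝ) : ℂ)) := by
      funext i
      fin_cases i
      · show ∏ j ∈ Finset.univ.erase (0 : Fin 3), ((y j ^ 2 : ℝ) : ℂ) = ((w 0 ^ 2 : ℝ) : ℂ)
        rw [show (Finset.univ.erase (0 : Fin 3)) = {1, 2} by decide,
          Finset.prod_insert (by decide), Finset.prod_singleton,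
          show w 0 = y 1 * y 2 by rw [hw]; rfl]
        push_cast; ring
      · show ∏ j ∈ Finset.univ.erase (1 : Fin 3), ((y j ^ 2 : ℝ) : ℂ) = ((w 1 ^ 2 : ℝ) : ℂ)
        rw [show (Finset.univ.erase (1 : Fin 3)) = {0, 2} by decide,
          Finset.prod_insert (by decide), Finset.prod_singleton,
          show w 1 = y 0 * y 2 by rw [hw]; rfl]
        push_cast; ring
      · show ∏ j ∈ Finset.univ.erase (2 : Fin 3), ((y j ^ 2 : ℝ) : ℂ) = ((w 2 ^ 2 : ℝ) : ℂ)
        rw [show (Finset.univ.erase (2 : Fin 3)) = {0, 1} by decide,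
          Finset.prod_insert (by decide), Finset.prod_singleton,
          show w 2 = y 0 * y 1 by rw [hw]; rfl]
        push_cast; ring
    rw [hfun, ← Matrix.mul_assoc]
  -- step 3 : column sums of Yt
  have hdiagentry : ∀ (v : Fin 3 → ℝ) (j : Fin 3),
      ((U_R * Matrix.diagonal (fun i => ((v i : ℝ) : ℂ)) * U_Rᴴ) j j)
        = ((∑ i, v i * ‖U_R j i‖^2 : ℝ) : ℂ) := by
    intro v j
    simp only [Matrix.mul_apply, Matrix.conjTranspose_apply, Matrix.diagonal_apply,
      Complex.ofReal_sum, Finset.sum_ite_eq', Finset.mem_univ, if_true, mul_ite, mul_zero,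
      ite_mul, zero_mul]
    congr 1; funext i
    rw [Complex.ofReal_mul, mul_comm (U_R j i), mul_assoc]
    congr 1
    rw [show (star (U_R j i) : ℂ) = (starRingEnd ℂ) (U_R j i) from rfl, Complex.mul_conj']
    push_cast
    ring
  have hs : ∀ j, ∑ k, ‖Yt k j‖^2 = ∑ i, (w i)^2 * ‖U_R j i‖^2 := by
    intro j
    have h1 : ((adjugate Y * (adjugate Y)ᴴ) j j) = ((∑ k, ‖Yt k j‖^2 : ℝ) : ℂ) := by
      subst hYt
      simp only [Matrix.mul_apply, Matrix.conjTranspose_apply, Matrix.transpose_apply,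
        Complex.ofReal_sum]
      congr 1; funext k
      rw [show (star (adjugate Y j k) : ℂ) = (starRingEnd ℂ) (adjugate Y j k) from rfl,
        Complex.mul_conj']
      push_cast
      ring
    have h2 := hdiagentry (fun i => (w i)^2) j
    rw [hNN] at h1
    exact_mod_cast h1.symm.trans h2
  -- step 4 : row/column normalization of U_R
  have hrow : ∑ i, ‖U_R δ i‖^2 = (1 : ℝ) := by
    have h1 : ((U_R * U_Rᴴ) δ δ) = ((∑ i, ‖U_R δ i‖^2 : ℝ) : ℂ) := by
      simp only [Matrix.mul_apply, Matrix.conjTranspose_apply, Complex.ofReal_sum]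
      congr 1; funext i
      rw [show (star (U_R δ i) : ℂ) = (starRingEnd ℂ) (U_R δ i) from rfl, Complex.mul_conj']
      push_cast; ring
    rw [hUR2] at h1
    simp only [Matrix.one_apply_eq] at h1
    exact_mod_cast h1.symm
  have hcoln : ∀ i, ∑ j, ‖U_R j i‖^2 = (1 : ℝ) := by
    intro i
    have h1 : ((U_Rᴴ * U_R) i i) = ((∑ j, ‖U_R j i‖^2 : ℝ) : ℂ) := by
      simp only [Matrix.mul_apply, Matrix.conjTranspose_apply, Complex.ofReal_sum]
      congr 1; funext j
      rw [mul_comm, show (star (U_R j i) : ℂ) = (starRingEnd ℂ) (U_R j i) from rfl,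
        Complex.mul_conj']
      push_cast; ring
    rw [hUR1] at h1
    simp only [Matrix.one_apply_eq] at h1
    exact_mod_cast h1.symm
  -- step 5 : key inequality
  have h3 : ∀ j, ∑ i, (w i)^2 * ‖U_R j i‖^2 ≤ ∑ i, (w i)^2 * ‖U_R δ i‖^2 := by
    intro j; rw [← hs, ← hs]; exact hδ j
  have hsumcols : ∑ j, (∑ i, (w i)^2 * ‖U_R j i‖^2) = (w 0)^2 + (w 1)^2 + (w 2)^2 := by
    rw [Finset.sum_comm]
    have : ∀ i, ∑ j, (w i)^2 * ‖U_R j i‖^2 = (w i)^2 := by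
      intro i
      rw [← Finset.mul_sum, hcoln, mul_one]
    simp only [this]
    rw [Fin.sum_univ_three]
  have hkey : (w 0)^2 + (w 1)^2 + (w 2)^2 ≤ 3 * ∑ i, (w i)^2 * ‖U_R δ i‖^2 := by
    rw [← hsumcols, Fin.sum_univ_three]
    linarith [h3 0, h3 1, h3 2]
  rw [Fin.sum_univ_three] at hkey
  rw [Fin.sum_univ_three] at hrow
  have hw0 : w 0 = y 1 * y 2 := rfl
  have hw1 : w 1 = y 0 * y 2 := rfl
  have hw2 : w 2 = y 0 * y 1 := rfl
  rw [hw0, hw1, hw2] at hkey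
  exact final_algebra (y 0) (y 1) (y 2) (‖U_R δ 0‖^2) (‖U_R δ 1‖^2) (‖U_R δ 2‖^2)
    hy0 h01 h12 hgap (by positivity) (by positivity) (by positivity) hrow hkey
end

section
/- Let Y be a complex 3×3 matrix with SVD Y = U_L · diag(y₁, y₂, y₃) · U_R†, 0 ≤ y₁ ≤ y₂ ≤ y₃, and y₃² > 2y₂². Let α index a longest row of Y and β a longest column of Y, and set X = (2y₃² − y₂²)/(y₃² − 2y₂²). If Y_{αβ} ≠ 0 and y₃ > X·y₂, then y₃²/(y₃ + X y₂) ≤ √((YY†)_{αα} (Y†Y)_{ββ}) / |Y_{αβ}| ≤ (y₃² + X y₂²)/(y₃ − X y₂). -/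
open Matrix

set_option maxHeartbeats 1000000 in
private theorem aux_le_of_sq_le_sq (x z : ℝ) (hx : 0 ≤ x) (hz : 0 ≤ z) (h : x^2 ≤ z^2) :
    x ≤ z := by
  nlinarith

private theorem aux_norm_upper (c0 c1 c2 : ℂ) : ‖c0+c1+c2‖ ≤ ‖c0‖+‖c1‖+‖c2‖ :=
  le_trans (norm_add_le _ _) (by linarith [norm_add_le c0 c1])

private theorem aux_norm_lower (c0 c1 c2 : ℂ) : ‖c2‖ - (‖c0‖+‖c1‖) ≤ ‖c0+c1+c2‖ := by
  have h := norm_sub_le (c0+c1+c2) (c0+c1)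
  have h2 : c0+c1+c2 - (c0+c1) = c2 := by ring
  rw [h2] at h
  linarith [norm_add_le c0 c1]

set_option maxHeartbeats 1000000 in
private theorem aux_real_endgame (y0 y1 y2 a0 a1 a2 b0 b1 b2 N X R C : ℝ)
    (hy0 : 0 ≤ y0) (h01 : y0 ≤ y1) (h12 : y1 ≤ y2) (hgap : 2*y1^2 < y2^2)
    (ha : a0^2+a1^2+a2^2 = 1) (hb : b0^2+b1^2+b2^2 = 1)
    (ha0 : 0 ≤ a0) (ha1 : 0 ≤ a1) (ha2 : 0 ≤ a2)
    (hb0 : 0 ≤ b0) (hb1 : 0 ≤ b1) (hb2 : 0 ≤ b2)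
    (hXdef : X = (2*y2^2-y1^2)/(y2^2-2*y1^2))
    (hRdef : R = y0^2*a0^2+y1^2*a1^2+y2^2*a2^2)
    (hCdef : C = y0^2*b0^2+y1^2*b1^2+y2^2*b2^2)
    (hRge : y0^2+y1^2+y2^2 ≤ 3*R)
    (hCge : y0^2+y1^2+y2^2 ≤ 3*C)
    (hNup : N ≤ y0*(a0*b0) + y1*(a1*b1) + y2*(a2*b2))
    (hNlow : y2*(a2*b2) - (y0*(a0*b0)+y1*(a1*b1)) ≤ N)
    (hNpos : 0 < N)
    (hX : X * y1 < y2) :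
    y2^2/(y2 + X*y1) ≤ Real.sqrt (R*C)/N ∧
    Real.sqrt (R*C)/N ≤ (y2^2 + X*y1^2)/(y2 - X*y1) := by
  have hy1 : 0 ≤ y1 := le_trans hy0 h01
  have ht : 0 < y2^2 - 2*y1^2 := by linarith
  have hy2 : 0 < y2 := by
    rcases (hy1.trans h12).lt_or_eq with h | h
    · exact h
    · exfalso; rw [← h] at hgap; nlinarith [sq_nonneg y1]
  have hXnn : 0 ≤ X := by
    rw [hXdef]; exact div_nonneg (by linarith [hgap, sq_nonneg y1]) (le_of_lt ht)
  have e1 : y1^2*(a0^2+a1^2+a2^2) = y1^2*1 := by rw [ha]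
  have e1b : y1^2*(b0^2+b1^2+b2^2) = y1^2*1 := by rw [hb]
  have hy01 : 0 ≤ y1^2-y0^2 := by
    nlinarith [mul_nonneg (sub_nonneg.2 h01) (add_nonneg hy1 hy0)]
  have pa0 : 0 ≤ (y1^2-y0^2)*a0^2 := mul_nonneg hy01 (sq_nonneg a0)
  have pb0 : 0 ≤ (y1^2-y0^2)*b0^2 := mul_nonneg hy01 (sq_nonneg b0)
  have h3a : y2^2 - 2*y1^2 ≤ 3*(y2^2-y1^2)*a2^2 := by
    linarith [hRge, hRdef, e1, pa0, sq_nonneg y0]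
  have h3b : y2^2 - 2*y1^2 ≤ 3*(y2^2-y1^2)*b2^2 := by
    linarith [hCge, hCdef, e1b, pb0, sq_nonneg y0]
  have h1a : a0^2 + a1^2 ≤ X * a2^2 := by
    rw [hXdef, div_mul_eq_mul_div, le_div_iff₀ ht]
    have e2 : (y2^2-2*y1^2)*(a0^2+a1^2+a2^2) = (y2^2-2*y1^2)*1 := by rw [ha]
    linarith [h3a, e2]
  have h1b : b0^2 + b1^2 ≤ X * b2^2 := by
    rw [hXdef, div_mul_eq_mul_div, le_div_iff₀ ht]
    have e2 : (y2^2-2*y1^2)*(b0^2+b1^2+b2^2) = (y2^2-2*y1^2)*1 := by rw [hb]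
    linarith [h3b, e2]
  have ha2p : 0 < a2 := by
    rcases lt_or_eq_of_le ha2 with h | h; · exact h
    exfalso; rw [← h] at h3a; norm_num at h3a; linarith
  have hb2p : 0 < b2 := by
    rcases lt_or_eq_of_le hb2 with h | h; · exact h
    exfalso; rw [← h] at h3b; norm_num at h3b; linarith
  have habp : 0 < a2*b2 := mul_pos ha2p hb2p
  have c1 : (a0*b0+a1*b1)^2 ≤ (X*(a2*b2))^2 := by
    have hmm : (a0^2+a1^2)*(b0^2+b1^2) ≤ (X*a2^2)*(X*b2^2) :=
      mul_le_mul h1a h1b (by positivity) (by positivity)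
    linarith [hmm, sq_nonneg (a0*b1-a1*b0)]
  have c2 : a0*b0+a1*b1 ≤ X*(a2*b2) :=
    aux_le_of_sq_le_sq _ _ (by positivity) (by positivity) c1
  have hcross : y0*(a0*b0) + y1*(a1*b1) ≤ X*y1*(a2*b2) := by
    have hint1 := mul_le_mul_of_nonneg_left c2 hy1
    have hint2 : 0 ≤ (y1-y0)*(a0*b0) := mul_nonneg (by linarith) (mul_nonneg ha0 hb0)
    linarith [hint1, hint2]
  have hNup' : N ≤ (y2 + X*y1)*(a2*b2) := by linarith [hNup, hcross]
  have hNlow' : (y2 - X*y1)*(a2*b2) ≤ N := by linarith [hNlow, hcross]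
  have hRa : y2^2*a2^2 ≤ R := by
    linarith [hRdef, mul_nonneg (sq_nonneg y0) (sq_nonneg a0),
      mul_nonneg (sq_nonneg y1) (sq_nonneg a1)]
  have hCa : y2^2*b2^2 ≤ C := by
    linarith [hCdef, mul_nonneg (sq_nonneg y0) (sq_nonneg b0),
      mul_nonneg (sq_nonneg y1) (sq_nonneg b1)]
  have hRu : R ≤ (y2^2 + X*y1^2)*a2^2 := by
    linarith [hRdef, mul_le_mul_of_nonneg_left h1a (sq_nonneg y1), pa0]
  have hCu : C ≤ (y2^2 + X*y1^2)*b2^2 := by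
    linarith [hCdef, mul_le_mul_of_nonneg_left h1b (sq_nonneg y1), pb0]
  have hRnn : 0 ≤ R := by rw [hRdef]; positivity
  have hCnn : 0 ≤ C := by rw [hCdef]; positivity
  have hs1 : y2^2*(a2*b2) ≤ Real.sqrt (R*C) := by
    have h2 : (y2^2*(a2*b2))^2 ≤ R*C := by
      linarith [mul_le_mul hRa hCa (by positivity) hRnn]
    calc y2^2*(a2*b2) = Real.sqrt ((y2^2*(a2*b2))^2) := (Real.sqrt_sq (by positivity)).symm
      _ ≤ Real.sqrt (R*C) := Real.sqrt_le_sqrt h2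
  have hXy : 0 ≤ y2^2 + X*y1^2 := by positivity
  have hs2 : Real.sqrt (R*C) ≤ (y2^2+X*y1^2)*(a2*b2) := by
    have h2 : R*C ≤ ((y2^2+X*y1^2)*(a2*b2))^2 := by
      linarith [mul_le_mul hRu hCu hCnn (by positivity : (0:ℝ) ≤ (y2^2 + X*y1^2)*a2^2)]
    calc Real.sqrt (R*C) ≤ Real.sqrt (((y2^2+X*y1^2)*(a2*b2))^2) := Real.sqrt_le_sqrt h2
      _ = (y2^2+X*y1^2)*(a2*b2) := Real.sqrt_sq (by positivity)
  have d1 : 0 < y2 + X*y1 := by linarith [mul_nonneg hXnn hy1]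
  have d2 : 0 < y2 - X*y1 := by linarith
  constructor
  · rw [div_le_div_iff₀ d1 hNpos]
    linarith [mul_le_mul_of_nonneg_left hNup' (sq_nonneg y2),
      mul_le_mul_of_nonneg_left hs1 (le_of_lt d1)]
  · rw [div_le_div_iff₀ hNpos d2]
    linarith [mul_le_mul_of_nonneg_left hNlow' hXy,
      mul_le_mul_of_nonneg_left hs2 (le_of_lt d2)]

private theorem aux_keyYY (U V : Matrix (Fin 3) (Fin 3) ℂ) (y : Fin 3 → ℝ)
    (hV : V ∈ Matrix.unitaryGroup (Fin 3) ℂ) :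
    (U * Matrix.diagonal (fun i => (y i : ℂ)) * Vᴴ) *
      ((U * Matrix.diagonal (fun i => (y i : ℂ)) * Vᴴ)ᴴ)
      = U * Matrix.diagonal (fun i => (((y i)^2 : ℝ) : ℂ)) * Uᴴ := by
  have hV1 : Vᴴ * V = 1 := Matrix.mem_unitaryGroup_iff'.mp hV
  have hdd : Matrix.diagonal (fun i => (y i:ℂ)) * Matrix.diagonal (star fun i => (y i:ℂ))
      = Matrix.diagonal (fun i => (((y i)^2 : ℝ):ℂ)) := by
    rw [Matrix.diagonal_mul_diagonal]
    congr 1; ext i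
    simp [Complex.star_def, Complex.conj_ofReal, sq]
  simp only [Matrix.conjTranspose_mul, Matrix.conjTranspose_conjTranspose,
    Matrix.diagonal_conjTranspose]
  rw [Matrix.mul_assoc (U * Matrix.diagonal _), ← Matrix.mul_assoc Vᴴ, hV1, Matrix.one_mul,
    ← Matrix.mul_assoc, Matrix.mul_assoc U, hdd]

private theorem aux_diagEntry (U : Matrix (Fin 3) (Fin 3) ℂ) (d : Fin 3 → ℝ) (j : Fin 3) :
    (U * Matrix.diagonal (fun i => ((d i : ℂ))) * Uᴴ) j j
      = ((∑ i, d i * ‖U j i‖^2 : ℝ) : ℂ) := by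
  simp only [Matrix.mul_apply, Matrix.diagonal_apply, Matrix.conjTranspose_apply]
  push_cast
  congr 1
  ext i
  simp only [mul_ite, mul_zero, ite_mul, zero_mul, Finset.sum_ite_eq', Finset.mem_univ, if_true]
  have hz : U j i * star (U j i) = ((‖U j i‖ : ℝ) : ℂ)^2 := by
    rw [Complex.star_def, Complex.mul_conj, Complex.normSq_eq_norm_sq]
    push_cast; ring
  linear_combination ((d i : ℝ) : ℂ) * hz

private theorem aux_rowEntry (M : Matrix (Fin 3) (Fin 3) ℂ) (j : Fin 3) :
    (M * Mᴴ) j j = ((∑ k, ‖M j k‖^2 : ℝ) : ℂ) := by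
  simp only [Matrix.mul_apply, Matrix.conjTranspose_apply]
  push_cast
  congr 1
  ext k
  rw [Complex.star_def, Complex.mul_conj, Complex.normSq_eq_norm_sq]
  push_cast; ring

private theorem aux_colEntry (M : Matrix (Fin 3) (Fin 3) ℂ) (j : Fin 3) :
    (Mᴴ * M) j j = ((∑ k, ‖M k j‖^2 : ℝ) : ℂ) := by
  simp only [Matrix.mul_apply, Matrix.conjTranspose_apply]
  push_cast
  congr 1
  ext k
  rw [Complex.star_def, mul_comm, Complex.mul_conj, Complex.normSq_eq_norm_sq]
  push_cast; ring

set_option maxHeartbeats 1000000 in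
/-- Theorem 3: bounds on `√((YY†)_{αα}(Y†Y)_{ββ})/|Y_{αβ}|` in terms of the singular
values, where α and β index a longest row and a longest column of Y. -/
theorem largest_singular_value_approximation_bounds
    (Y U_L U_R : Matrix (Fin 3) (Fin 3) ℂ) (y : Fin 3 → ℝ) (α β : Fin 3)
    (hUL : U_L ∈ Matrix.unitaryGroup (Fin 3) ℂ)
    (hUR : U_R ∈ Matrix.unitaryGroup (Fin 3) ℂ)
    (hy0 : 0 ≤ y 0) (h01 : y 0 ≤ y 1) (h12 : y 1 ≤ y 2)
    (hgap : 2 * (y 1)^2 < (y 2)^2)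
    (hSVD : Y = U_L * Matrix.diagonal (fun i => (y i : ℂ)) * U_Rᴴ)
    (hα : ∀ j, ∑ k, ‖Y j k‖^2 ≤ ∑ k, ‖Y α k‖^2)
    (hβ : ∀ j, ∑ k, ‖Y k j‖^2 ≤ ∑ k, ‖Y k β‖^2)
    (hYαβ : Y α β ≠ 0)
    (hX : (2 * (y 2)^2 - (y 1)^2) / ((y 2)^2 - 2 * (y 1)^2) * y 1 < y 2) :
    (y 2)^2 / (y 2 + (2 * (y 2)^2 - (y 1)^2) / ((y 2)^2 - 2 * (y 1)^2) * y 1)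
      ≤ Real.sqrt ((∑ k, ‖Y α k‖^2) * (∑ k, ‖Y k β‖^2)) / ‖Y α β‖ ∧
    Real.sqrt ((∑ k, ‖Y α k‖^2) * (∑ k, ‖Y k β‖^2)) / ‖Y α β‖
      ≤ ((y 2)^2 + (2 * (y 2)^2 - (y 1)^2) / ((y 2)^2 - 2 * (y 1)^2) * (y 1)^2)
          / (y 2 - (2 * (y 2)^2 - (y 1)^2) / ((y 2)^2 - 2 * (y 1)^2) * y 1) := by
  -- row norms in terms of U_L
  have hrow : ∀ j, (∑ k, ‖Y j k‖^2) = ∑ i, (y i)^2 * ‖U_L j i‖^2 := by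
    intro j
    have h1 : (Y * Yᴴ) j j = ((∑ k, ‖Y j k‖^2 : ℝ) : ℂ) := aux_rowEntry Y j
    rw [show Y * Yᴴ = U_L * Matrix.diagonal (fun i => (((y i)^2 : ℝ) : ℂ)) * U_Lᴴ from by
        rw [hSVD]; exact aux_keyYY U_L U_R y hUR,
      aux_diagEntry U_L (fun i => (y i)^2) j] at h1
    exact_mod_cast h1.symm
  -- column norms in terms of U_R
  have hYH : Yᴴ = U_R * Matrix.diagonal (fun i => (y i : ℂ)) * U_Lᴴ := by
    have hd : (Matrix.diagonal (fun i => (y i:ℂ)))ᴴ = Matrix.diagonal (fun i => (y i:ℂ)) := by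
      ext i j'
      rcases eq_or_ne i j' with h | h
      · subst h
        simp [Matrix.conjTranspose_apply, Matrix.diagonal_apply_eq, Complex.star_def,
          Complex.conj_ofReal]
      · rw [Matrix.conjTranspose_apply, Matrix.diagonal_apply_ne _ (Ne.symm h),
          Matrix.diagonal_apply_ne _ h, star_zero]
    rw [hSVD]
    simp only [Matrix.conjTranspose_mul, Matrix.conjTranspose_conjTranspose, hd,
      Matrix.mul_assoc]
  have hcol : ∀ j, (∑ k, ‖Y k j‖^2) = ∑ i, (y i)^2 * ‖U_R j i‖^2 := by
    intro j
    have h1 : (Yᴴ * Y) j j = ((∑ k, ‖Y k j‖^2 : ℝ) : ℂ) := aux_colEntry Y j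
    have h2 : Yᴴ * Y = U_R * Matrix.diagonal (fun i => (((y i)^2 : ℝ) : ℂ)) * U_Rᴴ := by
      have := aux_keyYY U_R U_L y hUL
      rwa [← hYH, Matrix.conjTranspose_conjTranspose] at this
    rw [h2, aux_diagEntry U_R (fun i => (y i)^2) j] at h1
    exact_mod_cast h1.symm
  -- unitary rows/columns are unit vectors
  have hunitL : ∀ j, (∑ i, ‖U_L j i‖^2) = 1 := by
    intro j
    have h1 : (U_L * U_Lᴴ) j j = ((∑ i, ‖U_L j i‖^2 : ℝ) : ℂ) := aux_rowEntry U_L j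
    rw [show U_L * U_Lᴴ = 1 from Matrix.mem_unitaryGroup_iff.mp hUL] at h1
    have h2 := h1.symm
    rw [Matrix.one_apply_eq] at h2
    exact_mod_cast h2
  have hunitR : ∀ j, (∑ i, ‖U_R j i‖^2) = 1 := by
    intro j
    have h1 : (U_R * U_Rᴴ) j j = ((∑ i, ‖U_R j i‖^2 : ℝ) : ℂ) := aux_rowEntry U_R j
    rw [show U_R * U_Rᴴ = 1 from Matrix.mem_unitaryGroup_iff.mp hUR] at h1
    have h2 := h1.symm
    rw [Matrix.one_apply_eq] at h2
    exact_mod_cast h2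
  have hcolL : ∀ i, (∑ j, ‖U_L j i‖^2) = 1 := by
    intro i
    have h1 : (U_Lᴴ * U_L) i i = ((∑ j, ‖U_L j i‖^2 : ℝ) : ℂ) := aux_colEntry U_L i
    rw [show U_Lᴴ * U_L = 1 from Matrix.mem_unitaryGroup_iff'.mp hUL] at h1
    have h2 := h1.symm
    rw [Matrix.one_apply_eq] at h2
    exact_mod_cast h2
  have hcolR : ∀ i, (∑ j, ‖U_R j i‖^2) = 1 := by
    intro i
    have h1 : (U_Rᴴ * U_R) i i = ((∑ j, ‖U_R j i‖^2 : ℝ) : ℂ) := aux_colEntry U_R i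
    rw [show U_Rᴴ * U_R = 1 from Matrix.mem_unitaryGroup_iff'.mp hUR] at h1
    have h2 := h1.symm
    rw [Matrix.one_apply_eq] at h2
    exact_mod_cast h2
  -- entry formula
  have hE : Y α β = U_L α 0 * ((y 0 : ℝ):ℂ) * star (U_R β 0)
      + U_L α 1 * ((y 1 : ℝ):ℂ) * star (U_R β 1)
      + U_L α 2 * ((y 2 : ℝ):ℂ) * star (U_R β 2) := by
    rw [hSVD]
    simp [Matrix.mul_apply, Matrix.mul_diagonal, Matrix.conjTranspose_apply, Fin.sum_univ_three]
  -- real data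
  have hy1nn : 0 ≤ y 1 := hy0.trans h01
  have hy2nn : 0 ≤ y 2 := hy1nn.trans h12
  have hn0 : ‖U_L α 0 * ((y 0 : ℝ):ℂ) * star (U_R β 0)‖
      = y 0 * (‖U_L α 0‖ * ‖U_R β 0‖) := by
    rw [norm_mul, norm_mul, norm_star, Complex.norm_real, Real.norm_eq_abs, abs_of_nonneg hy0]
    ring
  have hn1 : ‖U_L α 1 * ((y 1 : ℝ):ℂ) * star (U_R β 1)‖
      = y 1 * (‖U_L α 1‖ * ‖U_R β 1‖) := by
    rw [norm_mul, norm_mul, norm_star, Complex.norm_real, Real.norm_eq_abs, abs_of_nonneg hy1nn]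
    ring
  have hn2 : ‖U_L α 2 * ((y 2 : ℝ):ℂ) * star (U_R β 2)‖
      = y 2 * (‖U_L α 2‖ * ‖U_R β 2‖) := by
    rw [norm_mul, norm_mul, norm_star, Complex.norm_real, Real.norm_eq_abs, abs_of_nonneg hy2nn]
    ring
  have hNup : ‖Y α β‖ ≤ y 0 * (‖U_L α 0‖ * ‖U_R β 0‖) + y 1 * (‖U_L α 1‖ * ‖U_R β 1‖)
      + y 2 * (‖U_L α 2‖ * ‖U_R β 2‖) := by
    rw [hE]
    refine le_trans (aux_norm_upper _ _ _) ?_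
    rw [hn0, hn1, hn2]
  have hNlow : y 2 * (‖U_L α 2‖ * ‖U_R β 2‖)
      - (y 0 * (‖U_L α 0‖ * ‖U_R β 0‖) + y 1 * (‖U_L α 1‖ * ‖U_R β 1‖)) ≤ ‖Y α β‖ := by
    rw [hE]
    have h := aux_norm_lower (U_L α 0 * ((y 0 : ℝ):ℂ) * star (U_R β 0))
      (U_L α 1 * ((y 1 : ℝ):ℂ) * star (U_R β 1))
      (U_L α 2 * ((y 2 : ℝ):ℂ) * star (U_R β 2))
    rw [hn0, hn1, hn2] at h
    linarith
  have hNpos : 0 < ‖Y α β‖ := norm_pos_iff.mpr hYαβ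
  -- norms of rows/columns expanded
  have hRdef : (∑ k, ‖Y α k‖^2)
      = (y 0)^2*‖U_L α 0‖^2 + (y 1)^2*‖U_L α 1‖^2 + (y 2)^2*‖U_L α 2‖^2 := by
    rw [hrow α, Fin.sum_univ_three]
  have hCdef : (∑ k, ‖Y k β‖^2)
      = (y 0)^2*‖U_R β 0‖^2 + (y 1)^2*‖U_R β 1‖^2 + (y 2)^2*‖U_R β 2‖^2 := by
    rw [hcol β, Fin.sum_univ_three]
  have ha : ‖U_L α 0‖^2 + ‖U_L α 1‖^2 + ‖U_L α 2‖^2 = 1 := by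
    have := hunitL α; rwa [Fin.sum_univ_three] at this
  have hb : ‖U_R β 0‖^2 + ‖U_R β 1‖^2 + ‖U_R β 2‖^2 = 1 := by
    have := hunitR β; rwa [Fin.sum_univ_three] at this
  -- trace bound: maximal row/column has at least a third of the total
  have hRge : (y 0)^2 + (y 1)^2 + (y 2)^2 ≤ 3*(∑ k, ‖Y α k‖^2) := by
    have t0 := hα 0
    have t1 := hα 1
    have t2 := hα 2
    rw [hrow 0, Fin.sum_univ_three] at t0
    rw [hrow 1, Fin.sum_univ_three] at t1
    rw [hrow 2, Fin.sum_univ_three] at t2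
    have c0 := hcolL 0; rw [Fin.sum_univ_three] at c0
    have c1 := hcolL 1; rw [Fin.sum_univ_three] at c1
    have c2 := hcolL 2; rw [Fin.sum_univ_three] at c2
    have e0 : (y 0)^2*(‖U_L 0 0‖^2 + ‖U_L 1 0‖^2 + ‖U_L 2 0‖^2) = (y 0)^2*1 := by rw [c0]
    have e1 : (y 1)^2*(‖U_L 0 1‖^2 + ‖U_L 1 1‖^2 + ‖U_L 2 1‖^2) = (y 1)^2*1 := by rw [c1]
    have e2 : (y 2)^2*(‖U_L 0 2‖^2 + ‖U_L 1 2‖^2 + ‖U_L 2 2‖^2) = (y 2)^2*1 := by rw [c2]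
    linarith [t0, t1, t2, e0, e1, e2]
  have hCge : (y 0)^2 + (y 1)^2 + (y 2)^2 ≤ 3*(∑ k, ‖Y k β‖^2) := by
    have t0 := hβ 0
    have t1 := hβ 1
    have t2 := hβ 2
    rw [hcol 0, Fin.sum_univ_three] at t0
    rw [hcol 1, Fin.sum_univ_three] at t1
    rw [hcol 2, Fin.sum_univ_three] at t2
    have c0 := hcolR 0; rw [Fin.sum_univ_three] at c0
    have c1 := hcolR 1; rw [Fin.sum_univ_three] at c1
    have c2 := hcolR 2; rw [Fin.sum_univ_three] at c2
    have e0 : (y 0)^2*(‖U_R 0 0‖^2 + ‖U_R 1 0‖^2 + ‖U_R 2 0‖^2) = (y 0)^2*1 := by rw [c0]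
    have e1 : (y 1)^2*(‖U_R 0 1‖^2 + ‖U_R 1 1‖^2 + ‖U_R 2 1‖^2) = (y 1)^2*1 := by rw [c1]
    have e2 : (y 2)^2*(‖U_R 0 2‖^2 + ‖U_R 1 2‖^2 + ‖U_R 2 2‖^2) = (y 2)^2*1 := by rw [c2]
    linarith [t0, t1, t2, e0, e1, e2]
  exact aux_real_endgame (y 0) (y 1) (y 2) (‖U_L α 0‖) (‖U_L α 1‖) (‖U_L α 2‖)
    (‖U_R β 0‖) (‖U_R β 1‖) (‖U_R β 2‖) (‖Y α β‖)
    ((2 * (y 2)^2 - (y 1)^2) / ((y 2)^2 - 2 * (y 1)^2))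
    (∑ k, ‖Y α k‖^2) (∑ k, ‖Y k β‖^2)
    hy0 h01 h12 hgap ha hb (norm_nonneg _) (norm_nonneg _) (norm_nonneg _)
    (norm_nonneg _) (norm_nonneg _) (norm_nonneg _) rfl hRdef hCdef hRge hCge
    hNup hNlow hNpos hX
end

section
/- Let Y be a complex 3×3 matrix with SVD Y = U_L · diag(y₁, y₂, y₃) · U_R†, 0 ≤ y₁ ≤ y₂ ≤ y₃, y₂² > 2y₁². Let Ỹ be the cofactor matrix of Y, γ the index of a longest row of Ỹ, δ the index of a longest column of Ỹ, and Z = (2y₂² − y₁²)/(y₂² − 2y₁²). If Ỹ_{γδ} ≠ 0 and y₂ > Z y₁, then (y₃² y₂²)/(y₃ y₂ + Z y₃ y₁) ≤ √((ỸỸ†)_{γγ} (Ỹ†Ỹ)_{δδ}) / |Ỹ_{γδ}| ≤ ((y₃y₂)² + Z (y₃y₁)²)/(y₃y₂ − Z y₃ y₁). -/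
open Matrix

set_option maxHeartbeats 1600000 in
private lemma cofactor_aux (y0 y1 y2 Z a0 a1 a2 b0 b1 b2 R C T : ℝ)
    (hy0 : 0 ≤ y0) (h01 : y0 ≤ y1) (h12 : y1 ≤ y2) (hgap : 2*y0^2 < y1^2)
    (hZdef : Z = (2*y1^2 - y0^2)/(y1^2 - 2*y0^2)) (hZy : Z*y0 < y1)
    (ha0 : 0 ≤ a0) (ha1 : 0 ≤ a1) (ha2 : 0 ≤ a2)
    (hb0 : 0 ≤ b0) (hb1 : 0 ≤ b1) (hb2 : 0 ≤ b2)
    (harow : a0^2 + a1^2 + a2^2 = 1) (hbrow : b0^2 + b1^2 + b2^2 = 1)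
    (hR : R = (y1*y2)^2*a0^2 + (y0*y2)^2*a1^2 + (y0*y1)^2*a2^2)
    (hC : C = (y1*y2)^2*b0^2 + (y0*y2)^2*b1^2 + (y0*y1)^2*b2^2)
    (havgR : (y1*y2)^2 + (y0*y2)^2 + (y0*y1)^2 ≤ 3*R)
    (havgC : (y1*y2)^2 + (y0*y2)^2 + (y0*y1)^2 ≤ 3*C)
    (hTpos : 0 < T)
    (hTub : T ≤ (y1*y2)*(a0*b0) + (y0*y2)*(a1*b1) + (y0*y1)*(a2*b2))
    (hTlb : (y1*y2)*(a0*b0) - (y0*y2)*(a1*b1) - (y0*y1)*(a2*b2) ≤ T) :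
    y2^2*y1^2/(y2*y1 + Z*(y2*y0)) ≤ Real.sqrt (R*C)/T ∧
    Real.sqrt (R*C)/T ≤ ((y2*y1)^2 + Z*(y2*y0)^2)/(y2*y1 - Z*(y2*y0)) := by
  have hy1 : 0 < y1 := by
    rcases lt_or_eq_of_le (le_trans hy0 h01) with h | h
    · exact h
    · exfalso; nlinarith only [h, hgap, sq_nonneg y0]
  have hy2 : 0 < y2 := lt_of_lt_of_le hy1 h12
  have hd : 0 < y1^2 - 2*y0^2 := by linarith
  have hZpos : 0 < Z := by
    rw [hZdef]; exact div_pos (by nlinarith only [hgap, sq_nonneg y0]) hd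
  have hy12 : y1^2 ≤ y2^2 := by nlinarith only [h12, hy1]
  have hs21 : (y0*y1)^2 ≤ (y0*y2)^2 := by
    nlinarith only [mul_le_mul_of_nonneg_left hy12 (mul_nonneg hy0 hy0)]
  -- key overlap bounds
  have eA := congrArg (fun x => (y0*y2)^2 * x) harow
  have eB := congrArg (fun x => (y0*y2)^2 * x) hbrow
  have eA' := congrArg (fun x => (y1^2 - 2*y0^2) * x) harow
  have eB' := congrArg (fun x => (y1^2 - 2*y0^2) * x) hbrow
  simp only [mul_one] at eA eB eA' eB'
  have hKA : a1^2 + a2^2 ≤ Z * a0^2 := by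
    have hK3 : y1^2 - 2*y0^2 ≤ 3*(y1^2 - y0^2)*a0^2 := by
      nlinarith only [havgR, eA, mul_pos hy2 hy2, sq_nonneg (y0*y1), hR,
        mul_nonneg (sub_nonneg.mpr hs21) (sq_nonneg a2)]
    rw [hZdef, div_mul_eq_mul_div, le_div_iff₀ hd]
    linarith only [hK3, eA']
  have hKB : b1^2 + b2^2 ≤ Z * b0^2 := by
    have hK3 : y1^2 - 2*y0^2 ≤ 3*(y1^2 - y0^2)*b0^2 := by
      nlinarith only [havgC, eB, mul_pos hy2 hy2, sq_nonneg (y0*y1), hC,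
        mul_nonneg (sub_nonneg.mpr hs21) (sq_nonneg b2)]
    rw [hZdef, div_mul_eq_mul_div, le_div_iff₀ hd]
    linarith only [hK3, eB']
  have ha0p : 0 < a0 := by
    rcases lt_or_eq_of_le ha0 with h | h
    · exact h
    · exfalso
      rw [← h] at hKA
      nlinarith only [hKA, harow, h, sq_nonneg a1, sq_nonneg a2]
  have hb0p : 0 < b0 := by
    rcases lt_or_eq_of_le hb0 with h | h
    · exact h
    · exfalso
      rw [← h] at hKB
      nlinarith only [hKB, hbrow, h, sq_nonneg b1, sq_nonneg b2]
  have hab : 0 < a0*b0 := mul_pos ha0p hb0p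
  -- Cauchy-Schwarz
  have hcs : a1*b1 + a2*b2 ≤ Z*(a0*b0) := by
    have h1a : (a1^2+a2^2)*(b1^2+b2^2) ≤ (Z*a0^2)*(Z*b0^2) := by
      have t1 : (a1^2+a2^2)*(b1^2+b2^2) ≤ (Z*a0^2)*(b1^2+b2^2) :=
        mul_le_mul_of_nonneg_right hKA (by positivity)
      have t2 : (Z*a0^2)*(b1^2+b2^2) ≤ (Z*a0^2)*(Z*b0^2) :=
        mul_le_mul_of_nonneg_left hKB (by positivity)
      linarith only [t1, t2]
    have h1 : (a1*b1+a2*b2)^2 ≤ (Z*(a0*b0))^2 := by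
      nlinarith only [h1a, sq_nonneg (a1*b2 - a2*b1)]
    calc a1*b1 + a2*b2 = Real.sqrt ((a1*b1+a2*b2)^2) := (Real.sqrt_sq (by positivity)).symm
      _ ≤ Real.sqrt ((Z*(a0*b0))^2) := Real.sqrt_le_sqrt h1
      _ = Z*(a0*b0) := Real.sqrt_sq (by positivity)
  -- refined T bounds
  have hs12 : 0 ≤ y0*y2 - y0*y1 := by nlinarith only [hy0, h12]
  have hm1 : (y0*y2)*(a1*b1+a2*b2) ≤ (y0*y2)*(Z*(a0*b0)) :=
    mul_le_mul_of_nonneg_left hcs (by positivity)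
  have hm2 : 0 ≤ (y0*y2 - y0*y1)*(a2*b2) := mul_nonneg hs12 (by positivity)
  have hTub2 : T ≤ (y1*y2 + Z*(y0*y2))*(a0*b0) := by linarith only [hTub, hm1, hm2]
  have hTlb2 : (y1*y2 - Z*(y0*y2))*(a0*b0) ≤ T := by linarith only [hTlb, hm1, hm2]
  -- R and C bounds
  have hq1 : (y0*y2)^2*(a1^2+a2^2) ≤ (y0*y2)^2*(Z*a0^2) :=
    mul_le_mul_of_nonneg_left hKA (by positivity)
  have hq2 : 0 ≤ ((y0*y2)^2 - (y0*y1)^2)*a2^2 := mul_nonneg (by linarith) (sq_nonneg a2)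
  have hRle : R ≤ ((y1*y2)^2 + Z*(y0*y2)^2)*a0^2 := by linarith only [hR, hq1, hq2]
  have hq1' : (y0*y2)^2*(b1^2+b2^2) ≤ (y0*y2)^2*(Z*b0^2) :=
    mul_le_mul_of_nonneg_left hKB (by positivity)
  have hq2' : 0 ≤ ((y0*y2)^2 - (y0*y1)^2)*b2^2 := mul_nonneg (by linarith) (sq_nonneg b2)
  have hCle : C ≤ ((y1*y2)^2 + Z*(y0*y2)^2)*b0^2 := by linarith only [hC, hq1', hq2']
  have hRge : (y1*y2)^2*a0^2 ≤ R := by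
    have u1 : 0 ≤ (y0*y2)^2*a1^2 := by positivity
    have u2 : 0 ≤ (y0*y1)^2*a2^2 := by positivity
    linarith only [hR, u1, u2]
  have hCge : (y1*y2)^2*b0^2 ≤ C := by
    have u1 : 0 ≤ (y0*y2)^2*b1^2 := by positivity
    have u2 : 0 ≤ (y0*y1)^2*b2^2 := by positivity
    linarith only [hC, u1, u2]
  have hR0 : (0:ℝ) ≤ R := le_trans (by positivity) hRge
  have hC0 : (0:ℝ) ≤ C := le_trans (by positivity) hCge
  -- sqrt bounds
  have hsub : Real.sqrt (R*C) ≤ ((y1*y2)^2 + Z*(y0*y2)^2)*(a0*b0) := by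
    have h1 := mul_le_mul hRle hCle hC0 (by positivity)
    calc Real.sqrt (R*C) ≤ Real.sqrt ((((y1*y2)^2 + Z*(y0*y2)^2)*(a0*b0))^2) :=
          Real.sqrt_le_sqrt (by nlinarith only [h1])
      _ = ((y1*y2)^2 + Z*(y0*y2)^2)*(a0*b0) := Real.sqrt_sq (by positivity)
  have hslb : (y1*y2)^2*(a0*b0) ≤ Real.sqrt (R*C) := by
    have h1 := mul_le_mul hRge hCge (by positivity) hR0
    calc (y1*y2)^2*(a0*b0) = Real.sqrt (((y1*y2)^2*(a0*b0))^2) :=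
          (Real.sqrt_sq (by positivity)).symm
      _ ≤ Real.sqrt (R*C) := Real.sqrt_le_sqrt (by nlinarith only [h1])
  have hden1 : 0 < y2*y1 + Z*(y2*y0) := by
    have t1 : 0 < y2*y1 := mul_pos hy2 hy1
    have t2 : 0 ≤ Z*(y2*y0) := by positivity
    linarith only [t1, t2]
  have hden2 : 0 < y2*y1 - Z*(y2*y0) := by
    nlinarith only [mul_pos hy2 (sub_pos.mpr hZy)]
  have hXpos : 0 < (y2*y1)^2 + Z*(y2*y0)^2 := by positivity
  constructor
  · rw [div_le_div_iff₀ hden1 hTpos]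
    nlinarith only [mul_le_mul_of_nonneg_left hTub2 (by positivity : (0:ℝ) ≤ y2^2*y1^2),
      mul_le_mul_of_nonneg_left hslb hden1.le]
  · rw [div_le_div_iff₀ hTpos hden2]
    nlinarith only [mul_le_mul_of_nonneg_right hsub hden2.le,
      mul_le_mul_of_nonneg_left hTlb2 hXpos.le]

set_option maxHeartbeats 3200000 in
/-- Theorem for the cofactor matrix: bounds on
`√((ỸỸ†)_{γγ}(Ỹ†Ỹ)_{δδ})/|Ỹ_{γδ}|` in terms of the singular values. -/
theorem cofactor_singular_value_approximation_bounds
    (Y U_L U_R Yt : Matrix (Fin 3) (Fin 3) ℂ) (y : Fin 3 → ℝ) (γ δ : Fin 3)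
    (hUL : U_L ∈ Matrix.unitaryGroup (Fin 3) ℂ)
    (hUR : U_R ∈ Matrix.unitaryGroup (Fin 3) ℂ)
    (hy0 : 0 ≤ y 0) (h01 : y 0 ≤ y 1) (h12 : y 1 ≤ y 2)
    (hgap : 2 * (y 0)^2 < (y 1)^2)
    (hSVD : Y = U_L * Matrix.diagonal (fun i => (y i : ℂ)) * U_Rᴴ)
    (hYt : Yt = (Matrix.adjugate Y)ᵀ)
    (hγ : ∀ j, ∑ k, ‖Yt j k‖^2 ≤ ∑ k, ‖Yt γ k‖^2)
    (hδ : ∀ j, ∑ k, ‖Yt k j‖^2 ≤ ∑ k, ‖Yt k δ‖^2)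
    (hYtγδ : Yt γ δ ≠ 0)
    (hZ : (2 * (y 1)^2 - (y 0)^2) / ((y 1)^2 - 2 * (y 0)^2) * y 0 < y 1) :
    (y 2)^2 * (y 1)^2
        / (y 2 * y 1 + (2 * (y 1)^2 - (y 0)^2) / ((y 1)^2 - 2 * (y 0)^2) * (y 2 * y 0))
      ≤ Real.sqrt ((∑ k, ‖Yt γ k‖^2) * (∑ k, ‖Yt k δ‖^2)) / ‖Yt γ δ‖ ∧
    Real.sqrt ((∑ k, ‖Yt γ k‖^2) * (∑ k, ‖Yt k δ‖^2)) / ‖Yt γ δ‖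
      ≤ ((y 2 * y 1)^2 + (2 * (y 1)^2 - (y 0)^2) / ((y 1)^2 - 2 * (y 0)^2) * (y 2 * y 0)^2)
          / (y 2 * y 1 - (2 * (y 1)^2 - (y 0)^2) / ((y 1)^2 - 2 * (y 0)^2) * (y 2 * y 0)) := by
  -- basic positivity
  have hy1 : 0 < y 1 := by
    rcases lt_or_eq_of_le (le_trans hy0 h01) with h | h
    · exact h
    · exfalso; nlinarith [sq_nonneg (y 0)]
  have hy2 : 0 < y 2 := lt_of_lt_of_le hy1 h12
  have hd : 0 < (y 1)^2 - 2 * (y 0)^2 := by linarith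
  set Z : ℝ := (2 * (y 1)^2 - (y 0)^2) / ((y 1)^2 - 2 * (y 0)^2) with hZdef
  have hZpos : 0 < Z := div_pos (by nlinarith) hd
  -- singular values of the cofactor matrix
  set s : Fin 3 → ℝ := ![y 1 * y 2, y 0 * y 2, y 0 * y 1] with hsdef
  set S : Matrix (Fin 3) (Fin 3) ℂ := Matrix.diagonal (fun i => ((s i : ℝ) : ℂ)) with hSdef
  -- structure of Yt
  have adj_u : ∀ U : Matrix (Fin 3) (Fin 3) ℂ, U ∈ Matrix.unitaryGroup (Fin 3) ℂ →
      Matrix.adjugate U = U.det • Uᴴ := by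
    intro U hU
    have h : Uᴴ * U = 1 := Matrix.mem_unitaryGroup_iff'.mp hU
    calc adjugate U = (Uᴴ * U) * adjugate U := by rw [h, one_mul]
      _ = Uᴴ * (U * adjugate U) := by rw [mul_assoc]
      _ = Uᴴ * (U.det • 1) := by rw [Matrix.mul_adjugate]
      _ = U.det • Uᴴ := by rw [Matrix.mul_smul, mul_one]
  have hadjD : Matrix.adjugate (Matrix.diagonal (fun i => (y i : ℂ))) = S := by
    rw [Matrix.adjugate_diagonal]
    refine congrArg Matrix.diagonal (funext fun i => ?_)
    have e0 : Finset.univ.erase (0:Fin 3) = {1,2} := by decide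
    have e1 : Finset.univ.erase (1:Fin 3) = {0,2} := by decide
    have e2 : Finset.univ.erase (2:Fin 3) = {0,1} := by decide
    fin_cases i <;> simp [hsdef, e0, e1, e2, Finset.prod_pair]
  have hURs : U_Rᴴ ∈ Matrix.unitaryGroup (Fin 3) ℂ := Unitary.star_mem hUR
  set c : ℂ := U_L.det * U_Rᴴ.det with hcdef
  have hYt2 : Yt = c • (U_Lᴴᵀ * S * U_Rᵀ) := by
    rw [hYt, hSVD, Matrix.adjugate_mul_distrib, Matrix.adjugate_mul_distrib,
      adj_u _ hURs, adj_u _ hUL, hadjD]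
    simp only [Matrix.transpose_mul, Matrix.transpose_smul, Matrix.diagonal_transpose,
      Matrix.conjTranspose_conjTranspose, Matrix.smul_mul, Matrix.mul_smul, smul_smul,
      Matrix.mul_assoc, hSdef]
    rw [hcdef]
  have hccbar : c * (starRingEnd ℂ) c = 1 := by
    have h1 : U_L.det * (starRingEnd ℂ) U_L.det = 1 := by
      have := congrArg Matrix.det (Matrix.mem_unitaryGroup_iff.mp hUL)
      rwa [Matrix.det_mul, Matrix.star_eq_conjTranspose, Matrix.det_conjTranspose,
        Matrix.det_one] at this
    have h2 : U_Rᴴ.det * (starRingEnd ℂ) U_Rᴴ.det = 1 := by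
      have h : U_Rᴴ * U_R = 1 := Matrix.mem_unitaryGroup_iff'.mp hUR
      have hdet := congrArg Matrix.det h
      rw [Matrix.det_mul, Matrix.det_one] at hdet
      have hstar : (starRingEnd ℂ) U_Rᴴ.det = U_R.det := by
        have h3 := Matrix.det_conjTranspose U_Rᴴ
        rw [Matrix.conjTranspose_conjTranspose] at h3
        exact h3.symm
      rw [hstar]; exact hdet
    calc c * (starRingEnd ℂ) c
        = (U_L.det * (starRingEnd ℂ) U_L.det) * (U_Rᴴ.det * (starRingEnd ℂ) U_Rᴴ.det) := by
          simp [hcdef]; ring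
      _ = 1 := by rw [h1, h2, mul_one]
  have hSH : Sᴴ = S := by
    ext i j
    by_cases h : i = j <;>
      simp [hSdef, Matrix.conjTranspose_apply, Matrix.diagonal_apply, h, eq_comm,
        Complex.conj_ofReal]
  have hTC : ∀ A : Matrix (Fin 3) (Fin 3) ℂ, (Aᵀ)ᴴ = (Aᴴ)ᵀ := by
    intro A; ext i j
    simp [Matrix.conjTranspose_apply, Matrix.transpose_apply]
  -- Gram matrices
  have hWW : U_Rᵀ * U_Rᴴᵀ = 1 := by
    have h : U_Rᴴ * U_R = 1 := Matrix.mem_unitaryGroup_iff'.mp hUR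
    have h2 := congrArg Matrix.transpose h
    rw [Matrix.transpose_mul, Matrix.transpose_one] at h2
    exact h2
  have hVV : U_Lᵀ * U_Lᴴᵀ = 1 := by
    have h : U_Lᴴ * U_L = 1 := Matrix.mem_unitaryGroup_iff'.mp hUL
    have h2 := congrArg Matrix.transpose h
    rw [Matrix.transpose_mul, Matrix.transpose_one] at h2
    exact h2
  have hmidR : ∀ X : Matrix (Fin 3) (Fin 3) ℂ, U_Rᵀ * (U_Rᴴᵀ * X) = X := fun X => by
    rw [← Matrix.mul_assoc, hWW, Matrix.one_mul]
  have hmidL : ∀ X : Matrix (Fin 3) (Fin 3) ℂ, U_Lᵀ * (U_Lᴴᵀ * X) = X := fun X => by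
    rw [← Matrix.mul_assoc, hVV, Matrix.one_mul]
  have hccs : c * star c = 1 := hccbar
  have hcc' : star c * c = 1 := by rw [mul_comm]; exact hccs
  have hG1 : Yt * Ytᴴ = U_Lᴴᵀ * ((S * S) * U_Lᵀ) := by
    rw [hYt2]
    simp only [Matrix.conjTranspose_smul, Matrix.conjTranspose_mul, hTC, hSH,
      Matrix.conjTranspose_conjTranspose, Matrix.smul_mul, Matrix.mul_smul, smul_smul]
    rw [hcc', one_smul]
    simp only [Matrix.mul_assoc, hmidR]
  have hG2 : Ytᴴ * Yt = U_Rᴴᵀ * ((S * S) * U_Rᵀ) := by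
    rw [hYt2]
    simp only [Matrix.conjTranspose_smul, Matrix.conjTranspose_mul, hTC, hSH,
      Matrix.conjTranspose_conjTranspose, Matrix.smul_mul, Matrix.mul_smul, smul_smul]
    rw [hccs, one_smul]
    simp only [Matrix.mul_assoc, hmidL]
  -- entrywise formulas
  have hdiagre : ∀ (A : Matrix (Fin 3) (Fin 3) ℂ) j, ((A * Aᴴ) j j).re = ∑ k, ‖A j k‖^2 := by
    intro A j
    simp [Matrix.mul_apply, Matrix.conjTranspose_apply, Complex.mul_conj, Complex.normSq_eq_norm_sq,
      ← Complex.ofReal_pow]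
  have hdiagre' : ∀ (A : Matrix (Fin 3) (Fin 3) ℂ) j, ((Aᴴ * A) j j).re = ∑ k, ‖A k j‖^2 := by
    intro A j
    simp [Matrix.mul_apply, Matrix.conjTranspose_apply, Complex.mul_conj', Complex.normSq_apply,
      Complex.sq_norm]
  have hentry : ∀ (U : Matrix (Fin 3) (Fin 3) ℂ) j,
      ((Uᴴᵀ * ((S * S) * Uᵀ)) j j).re = ∑ i, (s i)^2 * ‖U j i‖^2 := by
    intro U j
    have h1 : ((Uᴴᵀ * ((S * S) * Uᵀ)) j j)
        = ∑ i, (((s i)^2 : ℝ) : ℂ) * (star (U j i) * U j i) := by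
      simp only [hSdef, Matrix.diagonal_mul_diagonal, Matrix.mul_apply, Matrix.diagonal_apply,
        Matrix.transpose_apply, Matrix.conjTranspose_apply, ite_mul, zero_mul,
        Finset.sum_ite_eq, Finset.mem_univ, if_true]
      refine Finset.sum_congr rfl fun i _ => ?_
      push_cast
      ring
    rw [h1, Complex.re_sum]
    refine Finset.sum_congr rfl fun i _ => ?_
    rw [mul_comm (star (U j i)) (U j i),
      show star (U j i) = (starRingEnd ℂ) (U j i) from rfl,
      Complex.mul_conj, ← Complex.ofReal_mul, Complex.ofReal_re]
    simp [Complex.normSq_eq_norm_sq]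
  have hRow : ∀ j, ∑ k, ‖Yt j k‖^2 = ∑ i, (s i)^2 * ‖U_L j i‖^2 := fun j => by
    rw [← hdiagre Yt j, hG1, hentry]
  have hCol : ∀ j, ∑ k, ‖Yt k j‖^2 = ∑ i, (s i)^2 * ‖U_R j i‖^2 := fun j => by
    rw [← hdiagre' Yt j, hG2, hentry]
  -- row/column norms of the unitaries
  have hULrow : ∀ j, ∑ i, ‖U_L j i‖^2 = 1 := by
    intro j
    have h1 : U_L * U_Lᴴ = 1 := Matrix.mem_unitaryGroup_iff.mp hUL
    rw [← hdiagre U_L j, h1]; simp [Matrix.one_apply]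
  have hURrow : ∀ j, ∑ i, ‖U_R j i‖^2 = 1 := by
    intro j
    have h1 : U_R * U_Rᴴ = 1 := Matrix.mem_unitaryGroup_iff.mp hUR
    rw [← hdiagre U_R j, h1]; simp [Matrix.one_apply]
  have hULcol : ∀ i, ∑ j, ‖U_L j i‖^2 = 1 := by
    intro i
    have h1 : U_Lᴴ * U_L = 1 := Matrix.mem_unitaryGroup_iff'.mp hUL
    rw [← hdiagre' U_L i, h1]; simp [Matrix.one_apply]
  have hURcol : ∀ i, ∑ j, ‖U_R j i‖^2 = 1 := by
    intro i
    have h1 : U_Rᴴ * U_R = 1 := Matrix.mem_unitaryGroup_iff'.mp hUR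
    rw [← hdiagre' U_R i, h1]; simp [Matrix.one_apply]
  have hcnorm : ‖c‖ = 1 := by
    have h := hccs
    rw [show star c = (starRingEnd ℂ) c from rfl, Complex.mul_conj] at h
    have h2 : Complex.normSq c = 1 := by exact_mod_cast h
    have h3 : ‖c‖^2 = 1 := by rw [Complex.sq_norm]; exact h2
    nlinarith [norm_nonneg c]
  have hs0 : s 0 = y 1 * y 2 := rfl
  have hs1 : s 1 = y 0 * y 2 := rfl
  have hs2 : s 2 = y 0 * y 1 := rfl
  have hs0n : 0 ≤ s 0 := by rw [hs0]; positivity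
  have hs1n : 0 ≤ s 1 := by rw [hs1]; positivity
  have hs2n : 0 ≤ s 2 := by rw [hs2]; positivity
  -- the key overlap estimates
  -- averaged row bounds
  have havgR : (y 1*y 2)^2 + (y 0*y 2)^2 + (y 0*y 1)^2 ≤
      3 * ((y 1*y 2)^2*‖U_L γ 0‖^2 + (y 0*y 2)^2*‖U_L γ 1‖^2 + (y 0*y 1)^2*‖U_L γ 2‖^2) := by
    have h0 := hγ 0; have h1 := hγ 1; have h2 := hγ 2
    rw [hRow 0, hRow γ] at h0
    rw [hRow 1, hRow γ] at h1
    rw [hRow 2, hRow γ] at h2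
    simp only [Fin.sum_univ_three, hs0, hs1, hs2] at h0 h1 h2
    have c0 := hULcol 0; have c1 := hULcol 1; have c2 := hULcol 2
    simp only [Fin.sum_univ_three] at c0 c1 c2
    have m0 := congrArg (fun x => (y 1 * y 2)^2 * x) c0
    have m1 := congrArg (fun x => (y 0 * y 2)^2 * x) c1
    have m2 := congrArg (fun x => (y 0 * y 1)^2 * x) c2
    simp only [mul_one] at m0 m1 m2
    linarith only [m0, m1, m2, h0, h1, h2]
  have havgC : (y 1*y 2)^2 + (y 0*y 2)^2 + (y 0*y 1)^2 ≤
      3 * ((y 1*y 2)^2*‖U_R δ 0‖^2 + (y 0*y 2)^2*‖U_R δ 1‖^2 + (y 0*y 1)^2*‖U_R δ 2‖^2) := by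
    have h0 := hδ 0; have h1 := hδ 1; have h2 := hδ 2
    rw [hCol 0, hCol δ] at h0
    rw [hCol 1, hCol δ] at h1
    rw [hCol 2, hCol δ] at h2
    simp only [Fin.sum_univ_three, hs0, hs1, hs2] at h0 h1 h2
    have c0 := hURcol 0; have c1 := hURcol 1; have c2 := hURcol 2
    simp only [Fin.sum_univ_three] at c0 c1 c2
    have m0 := congrArg (fun x => (y 1 * y 2)^2 * x) c0
    have m1 := congrArg (fun x => (y 0 * y 2)^2 * x) c1
    have m2 := congrArg (fun x => (y 0 * y 1)^2 * x) c2
    simp only [mul_one] at m0 m1 m2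
    linarith only [m0, m1, m2, h0, h1, h2]
  -- the pivot entry
  have hTpos : 0 < ‖Yt γ δ‖ := norm_pos_iff.mpr hYtγδ
  have hTf : Yt γ δ = c * ((star (U_L γ 0) * ((s 0 : ℝ) : ℂ) * U_R δ 0)
      + (star (U_L γ 1) * ((s 1 : ℝ) : ℂ) * U_R δ 1)
      + (star (U_L γ 2) * ((s 2 : ℝ) : ℂ) * U_R δ 2)) := by
    rw [hYt2]
    simp only [Matrix.smul_apply, smul_eq_mul, Matrix.mul_apply, hSdef, Matrix.mul_diagonal,
      Matrix.diagonal_apply_eq, Matrix.transpose_apply, Matrix.conjTranspose_apply,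
      Fin.sum_univ_three]
    simp only [Matrix.diagonal_apply, Fin.reduceEq, if_false, reduceIte]
    rw [hcdef]
    ring
  have htn : ∀ i, ‖star (U_L γ i) * ((s i : ℝ) : ℂ) * U_R δ i‖
      = s i * (‖U_L γ i‖ * ‖U_R δ i‖) := by
    intro i
    have hsn : 0 ≤ s i := by fin_cases i <;> assumption
    rw [norm_mul, norm_mul, norm_star, Complex.norm_real, Real.norm_eq_abs,
      abs_of_nonneg hsn]
    ring
  have hTub : ‖Yt γ δ‖ ≤ (y 1*y 2)*(‖U_L γ 0‖*‖U_R δ 0‖) + (y 0*y 2)*(‖U_L γ 1‖*‖U_R δ 1‖)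
      + (y 0*y 1)*(‖U_L γ 2‖*‖U_R δ 2‖) := by
    rw [hTf, norm_mul, hcnorm, one_mul]
    refine le_trans (norm_add₃_le) ?_
    rw [htn 0, htn 1, htn 2, hs0, hs1, hs2]
  have hTlb : (y 1*y 2)*(‖U_L γ 0‖*‖U_R δ 0‖) - (y 0*y 2)*(‖U_L γ 1‖*‖U_R δ 1‖)
      - (y 0*y 1)*(‖U_L γ 2‖*‖U_R δ 2‖) ≤ ‖Yt γ δ‖ := by
    rw [hTf, norm_mul, hcnorm, one_mul]
    set t0 := star (U_L γ 0) * ((s 0 : ℝ) : ℂ) * U_R δ 0 with ht0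
    set t1 := star (U_L γ 1) * ((s 1 : ℝ) : ℂ) * U_R δ 1 with ht1
    set t2 := star (U_L γ 2) * ((s 2 : ℝ) : ℂ) * U_R δ 2 with ht2
    have key : ‖t0‖ ≤ ‖t0 + t1 + t2‖ + (‖t1‖ + ‖t2‖) := by
      calc ‖t0‖ = ‖(t0 + t1 + t2) - (t1 + t2)‖ := by congr 1; ring
        _ ≤ ‖t0 + t1 + t2‖ + ‖t1 + t2‖ := norm_sub_le _ _
        _ ≤ ‖t0 + t1 + t2‖ + (‖t1‖ + ‖t2‖) := by linarith only [norm_add_le t1 t2]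
    have e0 : ‖t0‖ = (y 1*y 2) * (‖U_L γ 0‖*‖U_R δ 0‖) := by rw [ht0, htn 0, hs0]
    have e1 : ‖t1‖ = (y 0*y 2) * (‖U_L γ 1‖*‖U_R δ 1‖) := by rw [ht1, htn 1, hs1]
    have e2 : ‖t2‖ = (y 0*y 1) * (‖U_L γ 2‖*‖U_R δ 2‖) := by rw [ht2, htn 2, hs2]
    linarith only [key, e0, e1, e2]
  -- row norms
  have harow : ‖U_L γ 0‖^2 + ‖U_L γ 1‖^2 + ‖U_L γ 2‖^2 = 1 := by
    have h := hULrow γ; simpa only [Fin.sum_univ_three] using h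
  have hbrow : ‖U_R δ 0‖^2 + ‖U_R δ 1‖^2 + ‖U_R δ 2‖^2 = 1 := by
    have h := hURrow δ; simpa only [Fin.sum_univ_three] using h
  -- rewrite the goal and apply the scalar lemma
  rw [hRow γ, hCol δ]
  simp only [Fin.sum_univ_three, hs0, hs1, hs2]
  exact cofactor_aux (y 0) (y 1) (y 2) Z ‖U_L γ 0‖ ‖U_L γ 1‖ ‖U_L γ 2‖
    ‖U_R δ 0‖ ‖U_R δ 1‖ ‖U_R δ 2‖ _ _ ‖Yt γ δ‖
    hy0 h01 h12 hgap hZdef hZ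
    (norm_nonneg _) (norm_nonneg _) (norm_nonneg _)
    (norm_nonneg _) (norm_nonneg _) (norm_nonneg _)
    harow hbrow rfl rfl havgR havgC hTpos hTub hTlb
end

section
/- Let Y be a complex 3×3 matrix with SVD Y = U_L · diag(y₁, y₂, y₃) · U_R†, 0 ≤ y₁ ≤ y₂ ≤ y₃, y₂² > 2y₁². Let Ỹ be the cofactor matrix of Y, let δ index a longest column of Ỹ with (Ỹ†Ỹ)_{δδ} > 0, define the unit vector w with components wᵢ = Ỹ*_{iδ}/√((Ỹ†Ỹ)_{δδ}), and set V_{i1} = (U_L† w)ᵢ. Then |V_{21}|² ≤ Z (y₁/y₂)², |V_{31}|² ≤ Z (y₁/y₃)², and 1 − |V_{11}|² ≤ Z (y₁/y₂)², where Z = (2y₂² − y₁²)/(y₂² − 2y₁²). -/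
set_option maxHeartbeats 1000000

open Matrix

private lemma adj_unitary (U : Matrix (Fin 3) (Fin 3) ℂ) (h : Uᴴ * U = 1) :
    adjugate U = det U • Uᴴ := by
  calc adjugate U = (Uᴴ * U) * adjugate U := by rw [h, one_mul]
  _ = Uᴴ * (U * adjugate U) := by rw [mul_assoc]
  _ = Uᴴ * (det U • 1) := by rw [mul_adjugate]
  _ = det U • Uᴴ := by rw [mul_smul_comm, mul_one]

private lemma sum_normsq_mulVec (M : Matrix (Fin 3) (Fin 3) ℂ) (hM : Mᴴ * M = 1)
    (x : Fin 3 → ℂ) : ∑ k, ‖(M *ᵥ x) k‖^2 = ∑ k, ‖x k‖^2 := by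
  have key : ∀ u : Fin 3 → ℂ, ((∑ k, ‖u k‖^2 : ℝ) : ℂ) = star u ⬝ᵥ u := by
    intro u
    push_cast
    rw [dotProduct]
    refine Finset.sum_congr rfl fun k _ => ?_
    rw [Pi.star_apply, Complex.star_def, Complex.conj_mul']
  have h2 : star (M *ᵥ x) ⬝ᵥ (M *ᵥ x) = star x ⬝ᵥ x := by
    rw [star_mulVec, dotProduct_mulVec, vecMul_vecMul, hM, vecMul_one]
  have := (key (M *ᵥ x)).trans (h2.trans (key x).symm)
  exact_mod_cast this

private lemma det_norm_one (U : Matrix (Fin 3) (Fin 3) ℂ) (h : Uᴴ * U = 1) :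
    ‖det U‖ = 1 := by
  have h1 : det Uᴴ * det U = 1 := by rw [← det_mul, h, det_one]
  rw [det_conjTranspose, Complex.star_def, Complex.conj_mul'] at h1
  have h2 : ‖det U‖^2 = 1 := by exact_mod_cast h1
  nlinarith [norm_nonneg (det U)]

private lemma master_ineq (A B C r0 r1 r2 n : ℝ)
    (hA : 0 ≤ A) (hAB : A ≤ B) (hBC : B ≤ C) (hgap : 2*A < B)
    (hr0 : 0 ≤ r0) (hr1 : 0 ≤ r1) (hr2 : 0 ≤ r2) (hsum : r0+r1+r2 = 1)
    (hn : n = B*C*r0 + A*C*r1 + A*B*r2)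
    (h3 : A*B + A*C + B*C ≤ 3*n) :
    (r1+r2) * (B*C) * (B - 2*A) ≤ (2*B - A) * n := by
  have hB : 0 < B := by nlinarith
  have hC : 0 < C := lt_of_lt_of_le hB hBC
  have hg0 : 0 < 2*B*C - A*C - A*B := by nlinarith
  have hin : 0 ≤ C*(2*B-A)^2 + B*(3*B*(B-2*A)+A*(A+B)) := by
    have h4 : 0 ≤ B*(3*B*(B-2*A)+A*(A+B)) :=
      mul_nonneg hB.le (by nlinarith)
    nlinarith [sq_nonneg (2*B-A), hC.le]
  have hP1 : (0:ℝ) ≤ (2*B-A)*(A*B+A*C+B*C)*(C*(B-A)) -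
      (B*C*(B-2*A))*(2*B*C-A*C-A*B) := by
    have := mul_nonneg hC.le (mul_nonneg hA hin)
    nlinarith [this]
  have hP2 : (0:ℝ) ≤ (2*B-A)*(A*B+A*C+B*C)*(B*(C-A)) -
      (B*C*(B-2*A))*(2*B*C-A*C-A*B) := by
    nlinarith [hP1, mul_nonneg (mul_nonneg (by linarith : (0:ℝ) ≤ 2*B-A)
      (by nlinarith : (0:ℝ) ≤ A*B+A*C+B*C)) (mul_nonneg hA (by linarith : (0:ℝ) ≤ C-B))]
  have hr0' : r0 = 1 - r1 - r2 := by linarith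
  subst hn hr0'
  have hg0F : 0 ≤ (2*B*C - A*C - A*B) *
      ((2*B - A) * (B*C*(1-r1-r2) + A*C*r1 + A*B*r2) - (r1+r2) * (B*C) * (B - 2*A)) := by
    nlinarith [mul_nonneg (mul_nonneg (by linarith : (0:ℝ) ≤ 2*B-A)
        (mul_nonneg hB.le hC.le))
        (by linarith : (0:ℝ) ≤ 3*(B*C*(1-r1-r2) + A*C*r1 + A*B*r2) - (A*B+A*C+B*C)),
      mul_nonneg hP1 hr1, mul_nonneg hP2 hr2]
  nlinarith [hg0F, hg0]

private lemma endgame (y0 y1 y2 r0 r1 r2 n V0 V1 V2 : ℝ)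
    (hy0 : 0 ≤ y0) (h01 : y0 ≤ y1) (h12 : y1 ≤ y2) (hgap : 2 * y0^2 < y1^2)
    (hr0 : 0 ≤ r0) (hr1 : 0 ≤ r1) (hr2 : 0 ≤ r2) (hrsum : r0 + r1 + r2 = 1)
    (hnpos : 0 < n) (h3 : (y1*y2)^2 + (y0*y2)^2 + (y0*y1)^2 ≤ 3*n)
    (hn : n = (y1*y2)^2*r0 + (y0*y2)^2*r1 + (y0*y1)^2*r2)
    (hV0 : V0 = (y1*y2)^2*r0/n) (hV1 : V1 = (y0*y2)^2*r1/n) (hV2 : V2 = (y0*y1)^2*r2/n) :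
    V1 ≤ (2*y1^2 - y0^2)/(y1^2 - 2*y0^2) * (y0/y1)^2 ∧
    V2 ≤ (2*y1^2 - y0^2)/(y1^2 - 2*y0^2) * (y0/y2)^2 ∧
    1 - V0 ≤ (2*y1^2 - y0^2)/(y1^2 - 2*y0^2) * (y0/y1)^2 := by
  have hA : (0:ℝ) ≤ y0^2 := sq_nonneg _
  have hAB : y0^2 ≤ y1^2 := by nlinarith
  have hBC : y1^2 ≤ y2^2 := by nlinarith
  have hB : (0:ℝ) < y1^2 := by nlinarith
  have hC : (0:ℝ) < y2^2 := lt_of_lt_of_le hB hBC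
  have hgapnn : (0:ℝ) ≤ y1^2 - 2*y0^2 := by linarith
  have hmaster := master_ineq (y0^2) (y1^2) (y2^2) r0 r1 r2 n hA hAB hBC (by linarith)
    hr0 hr1 hr2 hrsum (by rw [hn]; ring) (by nlinarith [h3])
  have hm' := mul_le_mul_of_nonneg_left hmaster hA
  refine ⟨?_, ?_, ?_⟩
  · rw [hV1, div_pow, div_mul_div_comm,
      div_le_div_iff₀ hnpos (mul_pos (by linarith) hB)]
    nlinarith [hm', mul_nonneg (mul_nonneg (mul_nonneg hA hr2)
      (mul_nonneg hB.le hC.le)) hgapnn]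
  · rw [hV2, div_pow, div_mul_div_comm,
      div_le_div_iff₀ hnpos (mul_pos (by linarith) hC)]
    nlinarith [hm', mul_nonneg (mul_nonneg (mul_nonneg hA hr1)
      (mul_nonneg hB.le hC.le)) hgapnn]
  · rw [hV0, div_pow, div_mul_div_comm]
    rw [show (1:ℝ) - (y1*y2)^2*r0/n = (n - (y1*y2)^2*r0)/n from by field_simp]
    rw [show n - (y1*y2)^2*r0 = (y0*y2)^2*r1 + (y0*y1)^2*r2 from by rw [hn]; ring]
    rw [div_le_div_iff₀ hnpos (mul_pos (by linarith) hB)]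
    nlinarith [hm', mul_nonneg (mul_nonneg (mul_nonneg (mul_nonneg hA hB.le)
      (sub_nonneg.mpr hBC)) hr2) hgapnn, sq_nonneg (y0*y1), sq_nonneg (y0*y2)]

/-- First-column bounds of Theorem 5: the normalized conjugated longest column w of the
cofactor matrix Ỹ satisfies `|(U_L† w)₂|² ≤ Z (y₁/y₂)²`, `|(U_L† w)₃|² ≤ Z (y₁/y₃)²`,
and `1 − |(U_L† w)₁|² ≤ Z (y₁/y₂)²`. -/
theorem normalized_cofactor_column_overlap_bounds
    (Y U_L U_R Yt : Matrix (Fin 3) (Fin 3) ℂ) (y : Fin 3 → ℝ) (δ : Fin 3)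
    (hUL : U_L ∈ Matrix.unitaryGroup (Fin 3) ℂ)
    (hUR : U_R ∈ Matrix.unitaryGroup (Fin 3) ℂ)
    (hy0 : 0 ≤ y 0) (h01 : y 0 ≤ y 1) (h12 : y 1 ≤ y 2)
    (hgap : 2 * (y 0)^2 < (y 1)^2)
    (hSVD : Y = U_L * Matrix.diagonal (fun i => (y i : ℂ)) * U_Rᴴ)
    (hYt : Yt = (Matrix.adjugate Y)ᵀ)
    (hδ : ∀ j, ∑ k, ‖Yt k j‖^2 ≤ ∑ k, ‖Yt k δ‖^2)
    (hN : 0 < ∑ k, ‖Yt k δ‖^2)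
    (w : Fin 3 → ℂ)
    (hw : ∀ i, w i = star (Yt i δ) / ((Real.sqrt (∑ k, ‖Yt k δ‖^2) : ℝ) : ℂ)) :
    ‖(U_Lᴴ *ᵥ w) 1‖^2 ≤ (2 * (y 1)^2 - (y 0)^2) / ((y 1)^2 - 2 * (y 0)^2) * (y 0 / y 1)^2 ∧
    ‖(U_Lᴴ *ᵥ w) 2‖^2 ≤ (2 * (y 1)^2 - (y 0)^2) / ((y 1)^2 - 2 * (y 0)^2) * (y 0 / y 2)^2 ∧
    1 - ‖(U_Lᴴ *ᵥ w) 0‖^2 ≤ (2 * (y 1)^2 - (y 0)^2) / ((y 1)^2 - 2 * (y 0)^2) * (y 0 / y 1)^2 := by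
  -- unitarity facts
  have hUL' : U_Lᴴ * U_L = 1 := by
    have := Matrix.mem_unitaryGroup_iff'.mp hUL
    rwa [Matrix.star_eq_conjTranspose] at this
  have hUR' : U_R * U_Rᴴ = 1 := by
    have := Matrix.mem_unitaryGroup_iff.mp hUR
    rwa [Matrix.star_eq_conjTranspose] at this
  have hUR'' : U_Rᴴ * U_R = 1 := by
    have := Matrix.mem_unitaryGroup_iff'.mp hUR
    rwa [Matrix.star_eq_conjTranspose] at this
  -- the singular values of the cofactor matrix
  set e : Fin 3 → ℝ := ![y 1 * y 2, y 0 * y 2, y 0 * y 1] with he_def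
  have he : ∀ m : Fin 3, (∏ l ∈ Finset.univ.erase m, (y l : ℂ)) = ((e m : ℝ) : ℂ) := by
    have e0 : (Finset.univ.erase (0:Fin 3)) = {1, 2} := by decide
    have e1 : (Finset.univ.erase (1:Fin 3)) = {0, 2} := by decide
    have e2 : (Finset.univ.erase (2:Fin 3)) = {0, 1} := by decide
    intro m
    fin_cases m
    · rw [show ((⟨0, by norm_num⟩ : Fin 3)) = 0 from rfl, e0]; simp [he_def]
    · rw [show ((⟨1, by norm_num⟩ : Fin 3)) = 1 from rfl, e1]; simp [he_def]
    · rw [show ((⟨2, by norm_num⟩ : Fin 3)) = 2 from rfl, e2]; simp [he_def]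
  set c : ℂ := det U_Rᴴ * det U_L with hc_def
  -- entrywise formula for the cofactor matrix
  have hYtE : ∀ i j, Yt i j = c *
      ∑ m, (starRingEnd ℂ) (U_L i m) * ((e m : ℝ) : ℂ) * U_R j m := by
    have hadjL : adjugate U_L = det U_L • U_Lᴴ := adj_unitary _ hUL'
    have hadjR : adjugate (U_Rᴴ) = det U_Rᴴ • U_R := by
      have := adj_unitary (U_Rᴴ) (by rwa [conjTranspose_conjTranspose])
      rwa [conjTranspose_conjTranspose] at this
    have hadj : adjugate Y = (det U_Rᴴ • U_R) *
        (Matrix.diagonal (fun m => ∏ l ∈ Finset.univ.erase m, (y l : ℂ)) * (det U_L • U_Lᴴ)) := by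
      rw [hSVD, Matrix.adjugate_mul_distrib, Matrix.adjugate_mul_distrib, hadjL, hadjR,
        Matrix.adjugate_diagonal]
    intro i j
    have h0 : Yt i j = adjugate Y j i := by rw [hYt]; rfl
    rw [h0, hadj, Matrix.mul_apply]
    simp only [Matrix.diagonal_mul, Matrix.smul_apply, smul_eq_mul,
      Matrix.conjTranspose_apply, Complex.star_def, he]
    rw [Finset.mul_sum]
    exact Finset.sum_congr rfl fun m _ => by ring
  have hcnorm : ‖c‖ = 1 := by
    rw [hc_def, norm_mul, det_norm_one U_L hUL',
      det_norm_one (U_Rᴴ) (by rwa [conjTranspose_conjTranspose]), mul_one]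
  -- column norms of Yt
  have hMc : (U_Lᴴᵀ)ᴴ * (U_Lᴴᵀ) = 1 := by
    have h1 : (U_Lᴴᵀ)ᴴ = U_Lᵀ := by
      ext i j
      simp [Matrix.conjTranspose_apply, Matrix.transpose_apply]
    rw [h1, ← Matrix.transpose_mul, hUL', Matrix.transpose_one]
  have hcol : ∀ j, ∑ k, ‖Yt k j‖^2 = ∑ m, (e m)^2 * ‖U_R j m‖^2 := by
    intro j
    have hYtcol : (fun k => Yt k j) =
        fun k => c * ((U_Lᴴᵀ *ᵥ (fun m => ((e m : ℝ) : ℂ) * U_R j m)) k) := by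
      funext k
      rw [hYtE k j]
      congr 1
      simp only [Matrix.mulVec, dotProduct, Matrix.transpose_apply,
        Matrix.conjTranspose_apply, Complex.star_def]
      exact Finset.sum_congr rfl fun m _ => by ring
    calc ∑ k, ‖Yt k j‖^2
        = ∑ k, ‖(U_Lᴴᵀ *ᵥ (fun m => ((e m : ℝ) : ℂ) * U_R j m)) k‖^2 := by
          refine Finset.sum_congr rfl fun k _ => ?_
          rw [show Yt k j = c * ((U_Lᴴᵀ *ᵥ (fun m => ((e m : ℝ) : ℂ) * U_R j m)) k)
            from congrFun hYtcol k, norm_mul, hcnorm, one_mul]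
    _ = ∑ m, ‖((e m : ℝ) : ℂ) * U_R j m‖^2 := sum_normsq_mulVec _ hMc _
    _ = ∑ m, (e m)^2 * ‖U_R j m‖^2 := by
          refine Finset.sum_congr rfl fun m _ => ?_
          rw [norm_mul, Complex.norm_real, mul_pow, Real.norm_eq_abs, sq_abs]
  -- row sums of |U_R|²
  have hrow : ∑ m, ‖U_R δ m‖^2 = 1 := by
    have h1 : (U_R * U_Rᴴ) δ δ = 1 := by rw [hUR']; simp
    rw [Matrix.mul_apply] at h1
    have hterm : ∀ m : Fin 3, U_R δ m * U_Rᴴ m δ = ((‖U_R δ m‖^2 : ℝ) : ℂ) := by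
      intro m
      rw [Matrix.conjTranspose_apply, Complex.star_def, Complex.mul_conj']
      norm_cast
    rw [Finset.sum_congr rfl (fun m _ => hterm m)] at h1
    exact_mod_cast h1
  have hcolsum : ∀ m, ∑ j, ‖U_R j m‖^2 = 1 := by
    intro m
    have h1 : (U_Rᴴ * U_R) m m = 1 := by rw [hUR'']; simp
    rw [Matrix.mul_apply] at h1
    have hterm : ∀ j : Fin 3, U_Rᴴ m j * U_R j m = ((‖U_R j m‖^2 : ℝ) : ℂ) := by
      intro j
      rw [Matrix.conjTranspose_apply, Complex.star_def, Complex.conj_mul']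
      norm_cast
    rw [Finset.sum_congr rfl (fun j _ => hterm j)] at h1
    exact_mod_cast h1
  -- abbreviations
  set n : ℝ := ∑ k, ‖Yt k δ‖^2 with hn_def
  -- the bound 3n ≥ sum of cofactor singular values squared
  have h3n : (e 0)^2 + (e 1)^2 + (e 2)^2 ≤ 3 * n := by
    have hs := Finset.sum_le_sum (fun j (_ : j ∈ (Finset.univ : Finset (Fin 3))) => hδ j)
    have hL : ∑ j : Fin 3, ∑ k, ‖Yt k j‖^2 = (e 0)^2 + (e 1)^2 + (e 2)^2 := by
      rw [Finset.sum_congr rfl (fun j _ => hcol j), Finset.sum_comm]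
      rw [Fin.sum_univ_three]
      rw [show ∀ m, ∑ j : Fin 3, (e m)^2 * ‖U_R j m‖^2 = (e m)^2
        from fun m => by rw [← Finset.mul_sum, hcolsum m, mul_one]]
      rw [show ∀ m, ∑ j : Fin 3, (e m)^2 * ‖U_R j m‖^2 = (e m)^2
        from fun m => by rw [← Finset.mul_sum, hcolsum m, mul_one]]
      rw [show ∀ m, ∑ j : Fin 3, (e m)^2 * ‖U_R j m‖^2 = (e m)^2
        from fun m => by rw [← Finset.mul_sum, hcolsum m, mul_one]]
    have hR : ∑ _j : Fin 3, n = 3 * n := by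
      rw [Finset.sum_const, Finset.card_univ, Fintype.card_fin]
      ring
    rw [hL, hR] at hs
    exact hs
  -- the components of U_Lᴴ w
  have hnpos : (0:ℝ) < n := hN
  have hsq : Real.sqrt n ^ 2 = n := Real.sq_sqrt hnpos.le
  have hsqpos : 0 < Real.sqrt n := Real.sqrt_pos.mpr hnpos
  have hV : ∀ i, ‖(U_Lᴴ *ᵥ w) i‖^2 = (e i)^2 * ‖U_R δ i‖^2 / n := by
    have hwv : w = (star c / ((Real.sqrt n : ℝ) : ℂ)) •
        (U_L *ᵥ (fun m => ((e m : ℝ) : ℂ) * (starRingEnd ℂ) (U_R δ m))) := by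
      funext k
      rw [Pi.smul_apply, smul_eq_mul, hw k, hYtE k δ, star_mul', star_sum]
      have hterm : ∀ m, star ((starRingEnd ℂ) (U_L k m) * ((e m : ℝ) : ℂ) * U_R δ m)
          = U_L k m * (((e m : ℝ) : ℂ) * (starRingEnd ℂ) (U_R δ m)) := by
        intro m
        simp only [star_mul', Complex.star_def, Complex.conj_conj, Complex.conj_ofReal]
        ring
      rw [Finset.sum_congr rfl (fun m _ => hterm m)]
      have hmv : (U_L *ᵥ (fun m => ((e m : ℝ) : ℂ) * (starRingEnd ℂ) (U_R δ m))) k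
          = ∑ m, U_L k m * (((e m : ℝ) : ℂ) * (starRingEnd ℂ) (U_R δ m)) := rfl
      rw [hmv]
      ring
    have hVv : U_Lᴴ *ᵥ w = (star c / ((Real.sqrt n : ℝ) : ℂ)) •
        (fun m => ((e m : ℝ) : ℂ) * (starRingEnd ℂ) (U_R δ m)) := by
      rw [hwv, Matrix.mulVec_smul, Matrix.mulVec_mulVec, hUL', Matrix.one_mulVec]
    intro i
    rw [hVv, Pi.smul_apply, smul_eq_mul, norm_mul, norm_div, norm_star, hcnorm,
      norm_mul, Complex.norm_real, Complex.norm_real, RCLike.norm_conj,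
      Real.norm_eq_abs, Real.norm_eq_abs, abs_of_nonneg hsqpos.le]
    rw [show (1 / Real.sqrt n * (|e i| * ‖U_R δ i‖))^2
        = (|e i|^2 * ‖U_R δ i‖^2) / (Real.sqrt n)^2 from by ring]
    rw [hsq, sq_abs]
  -- conclude via the real-variable endgame lemma
  have hnval : n = (y 1 * y 2)^2 * ‖U_R δ 0‖^2 + (y 0 * y 2)^2 * ‖U_R δ 1‖^2
      + (y 0 * y 1)^2 * ‖U_R δ 2‖^2 := by
    rw [hn_def, hcol δ, Fin.sum_univ_three, show e 0 = y 1 * y 2 from rfl,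
      show e 1 = y 0 * y 2 from rfl, show e 2 = y 0 * y 1 from rfl]
  have hrsum : ‖U_R δ 0‖^2 + ‖U_R δ 1‖^2 + ‖U_R δ 2‖^2 = 1 := by
    rw [← hrow, Fin.sum_univ_three]
  have h3n' : (y 1 * y 2)^2 + (y 0 * y 2)^2 + (y 0 * y 1)^2 ≤ 3 * n := by
    rw [show e 0 = y 1 * y 2 from rfl, show e 1 = y 0 * y 2 from rfl,
      show e 2 = y 0 * y 1 from rfl] at h3n
    exact h3n
  have hV0 : ‖(U_Lᴴ *ᵥ w) 0‖^2 = (y 1 * y 2)^2 * ‖U_R δ 0‖^2 / n := by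
    rw [hV 0, show e 0 = y 1 * y 2 from rfl]
  have hV1 : ‖(U_Lᴴ *ᵥ w) 1‖^2 = (y 0 * y 2)^2 * ‖U_R δ 1‖^2 / n := by
    rw [hV 1, show e 1 = y 0 * y 2 from rfl]
  have hV2 : ‖(U_Lᴴ *ᵥ w) 2‖^2 = (y 0 * y 1)^2 * ‖U_R δ 2‖^2 / n := by
    rw [hV 2, show e 2 = y 0 * y 1 from rfl]
  exact endgame (y 0) (y 1) (y 2) (‖U_R δ 0‖^2) (‖U_R δ 1‖^2) (‖U_R δ 2‖^2) n
    (‖(U_Lᴴ *ᵥ w) 0‖^2) (‖(U_Lᴴ *ᵥ w) 1‖^2) (‖(U_Lᴴ *ᵥ w) 2‖^2)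
    hy0 h01 h12 hgap (by positivity) (by positivity) (by positivity) hrsum
    hnpos h3n' hnval hV0 hV1 hV2
end

section
/- Let U be a 3×3 unitary matrix, let a and c be unit vectors in ℂ³ with ⟨a, c⟩ = ε, |ε| < 1, and let b = (c* × a*)/√(1 − |ε|²) (cross product of conjugates, normalized). Then for each i, |(U†b)ᵢ|² = (1 − |(U†c)ᵢ|² − |(U†a)ᵢ|² + |(U†c)ᵢ|²|(U†a)ᵢ|² − |ε − (U†a)ᵢ* (U†c)ᵢ|²)/(1 − |ε|²). -/
open Matrix

private lemma cross_star' (x y : Fin 3 → ℂ) :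
    crossProduct (star x) (star y) = star (crossProduct x y) := by
  funext i
  fin_cases i <;> simp [cross_apply, star_mul']

private lemma cross_mulVec' (M : Matrix (Fin 3) (Fin 3) ℂ) (x y : Fin 3 → ℂ) :
    crossProduct (M *ᵥ x) (M *ᵥ y) = (M.adjugate)ᵀ *ᵥ crossProduct x y := by
  funext i
  fin_cases i <;>
    simp [cross_apply, Matrix.mulVec, dotProduct, Fin.sum_univ_three,
      Matrix.adjugate_fin_three, Matrix.transpose_apply] <;> ring

private lemma conjT_mulVec_star' (M : Matrix (Fin 3) (Fin 3) ℂ) (z : Fin 3 → ℂ) :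
    Mᴴ *ᵥ star z = star (Mᵀ *ᵥ z) := by
  funext j
  simp [Matrix.mulVec, dotProduct, Matrix.conjTranspose_apply,
    Matrix.transpose_apply, Fin.sum_univ_three, star_mul']

private lemma norm_cast_conj (z : ℂ) : ((‖z‖ : ℂ))^2 = (starRingEnd ℂ) z * z := by
  rw [← Complex.mul_conj']; ring

private lemma normSq_identity (w D B e : ℂ)
    (h : (starRingEnd ℂ) w * w
      = 1 - (starRingEnd ℂ) D * D - (starRingEnd ℂ) B * B
        + (starRingEnd ℂ) D * D * ((starRingEnd ℂ) B * B)
        - (starRingEnd ℂ) (e - (starRingEnd ℂ) B * D) * (e - (starRingEnd ℂ) B * D)) :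
    ‖w‖^2 = 1 - ‖D‖^2 - ‖B‖^2 + ‖D‖^2 * ‖B‖^2 - ‖e - star B * D‖^2 := by
  rw [← Complex.ofReal_inj]
  push_cast
  simp only [norm_cast_conj, Complex.star_def]
  linear_combination h

/-- Identity for the components of the normalized conjugate cross product
`b = (c* × a*)/√(1−|ε|²)` in the basis defined by a unitary matrix U. -/
theorem cross_product_component_identity
    (U : Matrix (Fin 3) (Fin 3) ℂ)
    (hU : U ∈ Matrix.unitaryGroup (Fin 3) ℂ)
    (a c : Fin 3 → ℂ)
    (ha : ∑ i, ‖a i‖^2 = 1) (hc : ∑ i, ‖c i‖^2 = 1)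
    (ε : ℂ) (hε : ∑ i, star (a i) * c i = ε) (hε1 : ‖ε‖ < 1)
    (b : Fin 3 → ℂ)
    (hb : ∀ i, b i = (crossProduct (fun j => star (c j)) (fun j => star (a j))) i
        / ((Real.sqrt (1 - ‖ε‖^2) : ℝ) : ℂ)) :
    ∀ i, ‖(Uᴴ *ᵥ b) i‖^2 =
      (1 - ‖(Uᴴ *ᵥ c) i‖^2 - ‖(Uᴴ *ᵥ a) i‖^2
        + ‖(Uᴴ *ᵥ c) i‖^2 * ‖(Uᴴ *ᵥ a) i‖^2
        - ‖ε - star ((Uᴴ *ᵥ a) i) * (Uᴴ *ᵥ c) i‖^2) / (1 - ‖ε‖^2) := by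
  have hU1 : U * Uᴴ = 1 := by
    have := (Matrix.mem_unitaryGroup_iff).mp hU
    simpa [Matrix.star_eq_conjTranspose] using this
  set A : Fin 3 → ℂ := Uᴴ *ᵥ a with hAdef
  set C : Fin 3 → ℂ := Uᴴ *ᵥ c with hCdef
  have hUA : U *ᵥ A = a := by rw [hAdef, Matrix.mulVec_mulVec, hU1, Matrix.one_mulVec]
  have hUC : U *ᵥ C = c := by rw [hCdef, Matrix.mulVec_mulVec, hU1, Matrix.one_mulVec]
  -- inner products preserved
  have hinner : ∀ x y : Fin 3 → ℂ,
      star (Uᴴ *ᵥ x) ⬝ᵥ (Uᴴ *ᵥ y) = star x ⬝ᵥ y := by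
    intro x y
    rw [Matrix.star_mulVec, Matrix.conjTranspose_conjTranspose,
      ← Matrix.dotProduct_mulVec, Matrix.mulVec_mulVec, hU1, Matrix.one_mulVec]
  have hsq : ∀ z : ℂ, star z * z = ((‖z‖^2 : ℝ) : ℂ) := by
    intro z
    rw [Complex.star_def, mul_comm, Complex.mul_conj', Complex.ofReal_pow]
  have HA : (starRingEnd ℂ) (A 0) * A 0 + (starRingEnd ℂ) (A 1) * A 1
      + (starRingEnd ℂ) (A 2) * A 2 = 1 := by
    have h2 : star A ⬝ᵥ A = 1 := by
      rw [hinner a a]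
      simp only [dotProduct, Pi.star_apply, hsq]
      rw [← Complex.ofReal_sum, ha]
      norm_num
    simpa [dotProduct, Fin.sum_univ_three, Complex.star_def] using h2
  have HC : (starRingEnd ℂ) (C 0) * C 0 + (starRingEnd ℂ) (C 1) * C 1
      + (starRingEnd ℂ) (C 2) * C 2 = 1 := by
    have h2 : star C ⬝ᵥ C = 1 := by
      rw [hinner c c]
      simp only [dotProduct, Pi.star_apply, hsq]
      rw [← Complex.ofReal_sum, hc]
      norm_num
    simpa [dotProduct, Fin.sum_univ_three, Complex.star_def] using h2
  have HE : (starRingEnd ℂ) (A 0) * C 0 + (starRingEnd ℂ) (A 1) * C 1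
      + (starRingEnd ℂ) (A 2) * C 2 = ε := by
    have h2 : star A ⬝ᵥ C = ε := by
      rw [hinner a c, ← hε]
      simp [dotProduct]
    simpa [dotProduct, Fin.sum_univ_three, Complex.star_def] using h2
  have HE' : A 0 * (starRingEnd ℂ) (C 0) + A 1 * (starRingEnd ℂ) (C 1)
      + A 2 * (starRingEnd ℂ) (C 2) = (starRingEnd ℂ) ε := by
    have := congrArg (starRingEnd ℂ) HE
    simpa [map_add, _root_.map_mul, Complex.conj_conj, mul_comm] using this
  -- positivity
  have hepos : (0:ℝ) < 1 - ‖ε‖^2 := by nlinarith [norm_nonneg ε]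
  set s : ℝ := Real.sqrt (1 - ‖ε‖^2) with hsdef
  have hs2 : s^2 = 1 - ‖ε‖^2 := Real.sq_sqrt hepos.le
  have hspos : 0 < s := Real.sqrt_pos.mpr hepos
  -- rewrite b
  have hbv : b = ((s:ℂ))⁻¹ • crossProduct (star c) (star a) := by
    funext j
    rw [hb j]
    simp only [Pi.smul_apply, smul_eq_mul]
    rw [div_eq_inv_mul]
    rfl
  -- determinant
  have hdet : det U * star (det U) = 1 := by
    have : det (U * Uᴴ) = det (1 : Matrix (Fin 3) (Fin 3) ℂ) := by rw [hU1]
    rwa [Matrix.det_mul, Matrix.det_conjTranspose, Matrix.det_one] at this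
  have hdetn : ‖det U‖ = 1 := by
    have h2 : ‖det U * star (det U)‖ = 1 := by rw [hdet]; simp
    rw [norm_mul, norm_star] at h2
    nlinarith [norm_nonneg U.det]
  -- transform of b
  have hkey : Uᴴ *ᵥ b = ((s:ℂ))⁻¹ • star (det U • crossProduct C A) := by
    rw [hbv, Matrix.mulVec_smul]
    congr 1
    rw [cross_star', conjT_mulVec_star']
    congr 1
    rw [← hUA, ← hUC, cross_mulVec', Matrix.mulVec_mulVec, ← Matrix.transpose_mul,
      Matrix.adjugate_mul, Matrix.transpose_smul, Matrix.transpose_one,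
      Matrix.smul_mulVec, Matrix.one_mulVec]
  intro i
  have hnorm : ‖(Uᴴ *ᵥ b) i‖^2 = ‖(crossProduct C A) i‖^2 / (1 - ‖ε‖^2) := by
    rw [hkey]
    simp only [Pi.smul_apply, Pi.star_apply, smul_eq_mul]
    rw [norm_mul, norm_star, norm_mul, hdetn, mul_pow, mul_pow, norm_inv,
      Complex.norm_real, Real.norm_eq_abs, abs_of_pos hspos, one_pow, one_mul,
      inv_pow, hs2, div_eq_inv_mul]
  rw [hnorm]
  have h0 : ‖(crossProduct C A) (0 : Fin 3)‖^2 =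
      1 - ‖C 0‖^2 - ‖A 0‖^2 + ‖C 0‖^2 * ‖A 0‖^2 - ‖ε - star (A 0) * C 0‖^2 := by
    have e0 : (crossProduct C A) (0 : Fin 3) = C 1 * A 2 - C 2 * A 1 := by
      simp [cross_apply]
    rw [e0]
    apply normSq_identity
    simp only [map_sub, _root_.map_mul, Complex.conj_conj]
    linear_combination (1 - A 0 * (starRingEnd ℂ) (A 0)) * HC
      + ((starRingEnd ℂ) (C 1) * C 1 + (starRingEnd ℂ) (C 2) * C 2) * HA
      + (A 0 * (starRingEnd ℂ) (C 0) - (starRingEnd ℂ) ε) * HE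
      - ((starRingEnd ℂ) (A 1) * C 1 + (starRingEnd ℂ) (A 2) * C 2) * HE'
  have h1 : ‖(crossProduct C A) (1 : Fin 3)‖^2 =
      1 - ‖C 1‖^2 - ‖A 1‖^2 + ‖C 1‖^2 * ‖A 1‖^2 - ‖ε - star (A 1) * C 1‖^2 := by
    have e1 : (crossProduct C A) (1 : Fin 3) = C 2 * A 0 - C 0 * A 2 := by
      simp [cross_apply]
    rw [e1]
    apply normSq_identity
    simp only [map_sub, _root_.map_mul, Complex.conj_conj]
    linear_combination (1 - A 1 * (starRingEnd ℂ) (A 1)) * HC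
      + ((starRingEnd ℂ) (C 2) * C 2 + (starRingEnd ℂ) (C 0) * C 0) * HA
      + (A 1 * (starRingEnd ℂ) (C 1) - (starRingEnd ℂ) ε) * HE
      - ((starRingEnd ℂ) (A 2) * C 2 + (starRingEnd ℂ) (A 0) * C 0) * HE'
  have h2 : ‖(crossProduct C A) (2 : Fin 3)‖^2 =
      1 - ‖C 2‖^2 - ‖A 2‖^2 + ‖C 2‖^2 * ‖A 2‖^2 - ‖ε - star (A 2) * C 2‖^2 := by
    have e2 : (crossProduct C A) (2 : Fin 3) = C 0 * A 1 - C 1 * A 0 := by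
      simp [cross_apply]
    rw [e2]
    apply normSq_identity
    simp only [map_sub, _root_.map_mul, Complex.conj_conj]
    linear_combination (1 - A 2 * (starRingEnd ℂ) (A 2)) * HC
      + ((starRingEnd ℂ) (C 0) * C 0 + (starRingEnd ℂ) (C 1) * C 1) * HA
      + (A 2 * (starRingEnd ℂ) (C 2) - (starRingEnd ℂ) ε) * HE
      - ((starRingEnd ℂ) (A 0) * C 0 + (starRingEnd ℂ) (A 1) * C 1) * HE'
  have key : ∀ j : Fin 3, ‖(crossProduct C A) j‖^2 =
      1 - ‖C j‖^2 - ‖A j‖^2 + ‖C j‖^2 * ‖A j‖^2 - ‖ε - star (A j) * C j‖^2 := by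
    intro j; fin_cases j
    · exact h0
    · exact h1
    · exact h2
  rw [key i]
end

section
/- With the same hypotheses as the previous statement (A = U V_u, B = W V_d, U and W unitary, V = U†W, |(V_u)_{ij}| ≤ (ε_u)_{ij} for i≠j, |(V_u)_{ii}|² ≥ 1 − (δ_u)_{ii}, likewise for V_d), one has, entrywise, |A†B| ≥ √(I − δ_u) |V| √(I − δ_d) − (ε_uᵀ|V| + |V|ε_d + ε_uᵀ|V|ε_d), assuming δ_u, δ_d have diagonal entries in [0,1]. -/
/-!
Write `V_u = Uᴴ A`, `V_d = Wᴴ B` and `V = Uᴴ W`. Unitarity of `U` and `W` gives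
`Aᴴ B = V_uᴴ V V_d` and makes the columns of `V_u`, `V_d` unit vectors, so their diagonal
entries have modulus at most `1`. Splitting `V_uᴴ` and `V_d` into diagonal and off-diagonal
parts, the `(i, j)` entry of the product of the diagonal parts is `conj (V_u)ᵢᵢ Vᵢⱼ (V_d)ⱼⱼ`,
of modulus at least `√(1 - δ_u) |Vᵢⱼ| √(1 - δ_d)`, while the three products involving an
off-diagonal part are bounded entrywise by `ε_uᵀ |V|`, `|V| ε_d` and `ε_uᵀ |V| ε_d`.
-/

open Matrix

namespace Matrix

variable {l m n 𝕜 : Type*}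

theorem norm_mul_apply_le_of_le [Fintype m] [NonUnitalSeminormedRing 𝕜] {M : Matrix l m 𝕜}
    {N : Matrix m n 𝕜} {P : Matrix l m ℝ} {Q : Matrix m n ℝ}
    (hM : ∀ i k, ‖M i k‖ ≤ P i k) (hN : ∀ k j, ‖N k j‖ ≤ Q k j) (i : l) (j : n) :
    ‖(M * N) i j‖ ≤ (P * Q) i j := by
  rw [mul_apply, mul_apply]
  refine (norm_sum_le _ _).trans (Finset.sum_le_sum fun k _ => ?_)
  exact (norm_mul_le _ _).trans <|
    mul_le_mul (hM i k) (hN k j) (norm_nonneg _) ((norm_nonneg _).trans (hM i k))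

theorem norm_apply_le_one_of_sum_norm_sq_eq_one [Fintype n] [RCLike 𝕜] {M : Matrix n m 𝕜}
    {j : m} (h : ∑ k, ‖M k j‖ ^ 2 = 1) (i : n) : ‖M i j‖ ≤ 1 := by
  have : ‖M i j‖ ^ 2 ≤ 1 := h ▸ Finset.single_le_sum (fun k _ => sq_nonneg ‖M k j‖)
    (Finset.mem_univ i)
  exact (sq_le_one_iff₀ (norm_nonneg _)).mp this

theorem sum_norm_sq_apply_eq_conjTranspose_mul_self [Fintype n] [RCLike 𝕜] (M : Matrix n m 𝕜)
    (j : m) : ((∑ k, ‖M k j‖ ^ 2 : ℝ) : 𝕜) = (Mᴴ * M) j j := by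
  simp only [mul_apply, conjTranspose_apply, RCLike.star_def, RCLike.conj_mul]
  push_cast
  rfl

theorem sum_norm_sq_conjTranspose_mul_apply [Fintype n] [DecidableEq n] [RCLike 𝕜]
    {U : Matrix n n 𝕜} (hU : U ∈ unitaryGroup n 𝕜) (M : Matrix n m 𝕜) (j : m) :
    ∑ k, ‖(Uᴴ * M) k j‖ ^ 2 = ∑ k, ‖M k j‖ ^ 2 := by
  have hUU : U * Uᴴ = 1 := mem_unitaryGroup_iff.mp hU
  have : (Uᴴ * M)ᴴ * (Uᴴ * M) = Mᴴ * M := by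
    rw [conjTranspose_mul, conjTranspose_conjTranspose, Matrix.mul_assoc, ← Matrix.mul_assoc U,
      hUU, Matrix.one_mul]
  exact_mod_cast (sum_norm_sq_apply_eq_conjTranspose_mul_self (Uᴴ * M) j).trans
    (this ▸ (sum_norm_sq_apply_eq_conjTranspose_mul_self M j).symm)

theorem conjTranspose_mul_eq_of_mem_unitaryGroup [Fintype n] [DecidableEq n] [Fintype m]
    [CommRing 𝕜] [StarRing 𝕜] {U W : Matrix n n 𝕜} (hU : U ∈ unitaryGroup n 𝕜)
    (hW : W ∈ unitaryGroup n 𝕜) (A B : Matrix n m 𝕜) :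
    Aᴴ * B = (Uᴴ * A)ᴴ * (Uᴴ * W) * (Wᴴ * B) := by
  have hUU : U * Uᴴ = 1 := mem_unitaryGroup_iff.mp hU
  have hWW : W * Wᴴ = 1 := mem_unitaryGroup_iff.mp hW
  simp only [conjTranspose_mul, conjTranspose_conjTranspose, Matrix.mul_assoc]
  rw [← Matrix.mul_assoc W, hWW, Matrix.one_mul, ← Matrix.mul_assoc U, hUU, Matrix.one_mul]

section offDiag

variable [DecidableEq n] [NormedRing 𝕜] {X : Matrix n n 𝕜}

theorem norm_diagonal_diag_apply_le_one (hX : ∀ i, ‖X i i‖ ≤ 1) (i j : n) :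
    ‖diagonal X.diag i j‖ ≤ (1 : Matrix n n ℝ) i j := by
  by_cases h : i = j
  · subst h; simpa using hX i
  · simp [diagonal_apply_ne _ h, one_apply_ne h]

theorem norm_sub_diagonal_diag_apply_le {ε : Matrix n n ℝ} (hX : ∀ i j, i ≠ j → ‖X i j‖ ≤ ε i j)
    (hε : ∀ i, 0 ≤ ε i i) (i j : n) : ‖(X - diagonal X.diag) i j‖ ≤ ε i j := by
  by_cases h : i = j
  · subst h; simpa using hε i
  · simpa [diagonal_apply_ne _ h] using hX i j h

end offDiag

theorem sub_le_norm_mul_mul_apply [Fintype n] [DecidableEq n] [NormedDivisionRing 𝕜]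
    {X V Y : Matrix n n 𝕜} {εX εY : Matrix n n ℝ}
    (hXdiag : ∀ i, ‖X i i‖ ≤ 1) (hYdiag : ∀ i, ‖Y i i‖ ≤ 1)
    (hX : ∀ i j, i ≠ j → ‖X i j‖ ≤ εX i j) (hY : ∀ i j, i ≠ j → ‖Y i j‖ ≤ εY i j)
    (hεX : ∀ i, 0 ≤ εX i i) (hεY : ∀ i, 0 ≤ εY i i) (i j : n) :
    ‖X i i‖ * ‖V i j‖ * ‖Y j j‖
        - (εX * V.map norm + V.map norm * εY + εX * V.map norm * εY) i j
      ≤ ‖(X * V * Y) i j‖ := by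
  set D := diagonal X.diag
  set D' := diagonal Y.diag
  set E := X - D
  set E' := Y - D'
  have hsplit : X * V * Y = D * V * D' + (E * V * D' + D * V * E' + E * V * E') := by
    rw [← add_sub_cancel D X, ← add_sub_cancel D' Y]
    simp only [add_mul, mul_add]
    abel
  have hmain : (D * V * D') i j = X i i * V i j * Y j j := by
    simp [D, D', diagonal_mul, mul_diagonal]
  have hV : ∀ k l, ‖V k l‖ ≤ V.map norm k l := fun _ _ => le_rfl
  have hD := norm_diagonal_diag_apply_le_one hXdiag
  have hD' := norm_diagonal_diag_apply_le_one hYdiag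
  have hE := norm_sub_diagonal_diag_apply_le hX hεX
  have hE' := norm_sub_diagonal_diag_apply_le hY hεY
  have herr : ‖(E * V * D' + D * V * E' + E * V * E') i j‖
      ≤ (εX * V.map norm + V.map norm * εY + εX * V.map norm * εY) i j := by
    have h₁ := norm_mul_apply_le_of_le (norm_mul_apply_le_of_le hE hV) hD' i j
    have h₂ := norm_mul_apply_le_of_le (norm_mul_apply_le_of_le hD hV) hE' i j
    have h₃ := norm_mul_apply_le_of_le (norm_mul_apply_le_of_le hE hV) hE' i j
    rw [Matrix.mul_one] at h₁
    rw [Matrix.one_mul] at h₂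
    simp only [add_apply]
    linarith [norm_add₃_le (a := (E * V * D') i j) (b := (D * V * E') i j) (c := (E * V * E') i j)]
  calc ‖X i i‖ * ‖V i j‖ * ‖Y j j‖
        - (εX * V.map norm + V.map norm * εY + εX * V.map norm * εY) i j
      ≤ ‖(D * V * D') i j‖ - ‖(E * V * D' + D * V * E' + E * V * E') i j‖ := by
        rw [hmain, norm_mul, norm_mul]; linarith
    _ ≤ ‖(X * V * Y) i j‖ := by
        rw [hsplit, add_apply]; exact norm_sub_le_norm_add _ _

end Matrix

theorem approximate_ckm_entrywise_lower_bound_general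
    (A B U W : Matrix (Fin 3) (Fin 3) ℂ)
    (hU : U ∈ Matrix.unitaryGroup (Fin 3) ℂ)
    (hW : W ∈ Matrix.unitaryGroup (Fin 3) ℂ)
    (hAcol : ∀ j, ∑ i, ‖A i j‖^2 = 1)
    (hBcol : ∀ j, ∑ i, ‖B i j‖^2 = 1)
    (εu εd δu δd : Matrix (Fin 3) (Fin 3) ℝ)
    (hεu0 : ∀ i j, 0 ≤ εu i j) (hεd0 : ∀ i j, 0 ≤ εd i j)
    (hu : ∀ i j, i ≠ j → ‖(Uᴴ * A) i j‖ ≤ εu i j)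
    (hud : ∀ i, 1 - δu i i ≤ ‖(Uᴴ * A) i i‖^2)
    (hd : ∀ i j, i ≠ j → ‖(Wᴴ * B) i j‖ ≤ εd i j)
    (hdd : ∀ i, 1 - δd i i ≤ ‖(Wᴴ * B) i i‖^2) :
    ∀ i j, Real.sqrt (1 - δu i i) * ‖(Uᴴ * W) i j‖ * Real.sqrt (1 - δd j j)
        - (εuᵀ * Matrix.of (fun i j => ‖(Uᴴ * W) i j‖)
            + Matrix.of (fun i j => ‖(Uᴴ * W) i j‖) * εd
            + εuᵀ * Matrix.of (fun i j => ‖(Uᴴ * W) i j‖) * εd) i j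
      ≤ ‖(Aᴴ * B) i j‖ := by
  intro i j
  have hAdiag : ∀ k, ‖(Uᴴ * A) k k‖ ≤ 1 := fun k =>
    norm_apply_le_one_of_sum_norm_sq_eq_one ((sum_norm_sq_conjTranspose_mul_apply hU A k).trans
      (hAcol k)) k
  have hBdiag : ∀ k, ‖(Wᴴ * B) k k‖ ≤ 1 := fun k =>
    norm_apply_le_one_of_sum_norm_sq_eq_one ((sum_norm_sq_conjTranspose_mul_apply hW B k).trans
      (hBcol k)) k
  have hbound := sub_le_norm_mul_mul_apply (X := (Uᴴ * A)ᴴ) (V := Uᴴ * W) (εX := εuᵀ)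
    (fun k => by simpa using hAdiag k) hBdiag (fun k l hkl => by simpa using hu l k hkl.symm) hd
    (fun k => hεu0 k k) (fun k => hεd0 k k) i j
  rw [conjTranspose_mul_eq_of_mem_unitaryGroup hU hW A B]
  refine le_trans (sub_le_sub_right ?_ _) hbound
  rw [conjTranspose_apply, norm_star]
  gcongr
  · exact (Real.sqrt_le_left (norm_nonneg _)).mpr (hud i)
  · exact (Real.sqrt_le_left (norm_nonneg _)).mpr (hdd j)

/-- Entrywise lower bound for |A†B|:
`|A†B| ≥ √(I−δ_u)|V|√(I−δ_d) − (ε_uᵀ|V| + |V|ε_d + ε_uᵀ|V|ε_d)` where `V = U†W`. -/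
theorem approximate_ckm_entrywise_lower_bound
    (A B U W : Matrix (Fin 3) (Fin 3) ℂ)
    (hU : U ∈ Matrix.unitaryGroup (Fin 3) ℂ)
    (hW : W ∈ Matrix.unitaryGroup (Fin 3) ℂ)
    (hAcol : ∀ j, ∑ i, ‖A i j‖^2 = 1)
    (hBcol : ∀ j, ∑ i, ‖B i j‖^2 = 1)
    (εu εd δu δd : Matrix (Fin 3) (Fin 3) ℝ)
    (hεu0 : ∀ i j, 0 ≤ εu i j) (hεd0 : ∀ i j, 0 ≤ εd i j)
    (hεudiag : ∀ i, εu i i = 0) (hεddiag : ∀ i, εd i i = 0)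
    (hδu : ∀ i, 0 ≤ δu i i ∧ δu i i ≤ 1) (hδd : ∀ i, 0 ≤ δd i i ∧ δd i i ≤ 1)
    (hu : ∀ i j, i ≠ j → ‖(Uᴴ * A) i j‖ ≤ εu i j)
    (hud : ∀ i, 1 - δu i i ≤ ‖(Uᴴ * A) i i‖^2)
    (hd : ∀ i j, i ≠ j → ‖(Wᴴ * B) i j‖ ≤ εd i j)
    (hdd : ∀ i, 1 - δd i i ≤ ‖(Wᴴ * B) i i‖^2) :
    ∀ i j, Real.sqrt (1 - δu i i) * ‖(Uᴴ * W) i j‖ * Real.sqrt (1 - δd j j)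
        - (εuᵀ * Matrix.of (fun i j => ‖(Uᴴ * W) i j‖)
            + Matrix.of (fun i j => ‖(Uᴴ * W) i j‖) * εd
            + εuᵀ * Matrix.of (fun i j => ‖(Uᴴ * W) i j‖) * εd) i j
      ≤ ‖(Aᴴ * B) i j‖ :=
  approximate_ckm_entrywise_lower_bound_general A B U W hU hW hAcol hBcol εu εd δu δd hεu0 hεd0 hu
    hud hd hdd
end
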